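/- arXiv:1301.4292 — 11 statements merged into one kernel-verified Lean document; each statement's English description precedes it below -/
import Mathlib

section
/- Let n ≥ 1. Suppose f·log f is integrable and, for each i ∈ {1,…,n}, f_(i)·log f_(i) is integrable. Then the Shannon entropy of a perfect ranked set sample of size n is at most that of a simple random sample of the same size: Σ_{i=1}^n H(f_(i)) ≤ n·H(f), with equality when n = 1. -/
open MeasureTheory Real

/-- Cumulative distribution function of a density `f`. -/
noncomputable def cdfOf (f : ℝ → ℝ) (x : ℝ) : ℝ := ∫ t in Set.Iic x, f t

/-- Density of the `i`-th order statistic from a sample of size `n` with parent density `f`: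
`f_(i)(x) = i·C(n,i)·F(x)^(i-1)·(1-F(x))^(n-i)·f(x)`. -/
noncomputable def osDen (f : ℝ → ℝ) (n i : ℕ) (x : ℝ) : ℝ :=
  (i : ℝ) * (n.choose i : ℝ) * (cdfOf f x) ^ (i - 1) * (1 - cdfOf f x) ^ (n - i) * f x

/-- Shannon entropy of a density `g`. -/
noncomputable def shannonH (g : ℝ → ℝ) : ℝ := -∫ x, g x * Real.log (g x)

/-!
Writing `f_(i) = wᵢ(F) · f`, the identity `negMulLog (w y) = y · negMulLog w + w · negMulLog y`
splits `∑ᵢ negMulLog f_(i)` pointwise into `f · ∑ᵢ negMulLog wᵢ(F) + (∑ᵢ wᵢ(F)) · negMulLog f`.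
The weights are nonnegative and sum to `n` (a binomial expansion of `(F + (1 - F))^(n-1)`),
so `negMulLog w ≤ 1 - w` makes the first term nonpositive and the second equal to
`n · negMulLog f`. Integrating gives the inequality.
-/

open Finset

noncomputable def orderStatWeight (n i : ℕ) (u : ℝ) : ℝ :=
  (i : ℝ) * (n.choose i : ℝ) * u ^ (i - 1) * (1 - u) ^ (n - i)

lemma osDen_eq_orderStatWeight_mul (f : ℝ → ℝ) (n i : ℕ) (x : ℝ) :
    osDen f n i x = orderStatWeight n i (cdfOf f x) * f x := rfl

lemma orderStatWeight_nonneg (n i : ℕ) {u : ℝ} (hu₀ : 0 ≤ u) (hu₁ : u ≤ 1) :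
    0 ≤ orderStatWeight n i u := by
  have : 0 ≤ 1 - u := sub_nonneg.mpr hu₁
  unfold orderStatWeight
  positivity

lemma sum_orderStatWeight (n : ℕ) (u : ℝ) :
    ∑ i ∈ Icc 1 n, orderStatWeight n i u = n := by
  cases n with
  | zero => simp
  | succ m =>
    rw [← Ico_add_one_right_eq_Icc, sum_Ico_eq_sum_range, Nat.add_sub_cancel]
    push_cast
    calc ∑ j ∈ range (m + 1), orderStatWeight (m + 1) (1 + j) u
        = ∑ j ∈ range (m + 1), (m + 1 : ℝ) * (u ^ j * (1 - u) ^ (m - j) * m.choose j) := by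
          refine sum_congr rfl fun j _ => ?_
          have hchoose : ((m + 1) * m.choose j : ℝ) = (m + 1).choose (j + 1) * (j + 1) := by
            exact_mod_cast Nat.add_one_mul_choose_eq m j
          rw [orderStatWeight, add_comm 1 j, Nat.add_sub_cancel, Nat.add_sub_add_right]
          push_cast
          linear_combination -(u ^ j * (1 - u) ^ (m - j) * hchoose)
      _ = m + 1 := by
          rw [← mul_sum, ← add_pow, add_sub_cancel, one_pow, mul_one]

lemma sum_negMulLog_nonpos {ι : Type*} {s : Finset ι} {w : ι → ℝ}
    (hw : ∀ i ∈ s, 0 ≤ w i) (hsum : ∑ i ∈ s, w i = #s) :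
    ∑ i ∈ s, negMulLog (w i) ≤ 0 := by
  calc ∑ i ∈ s, negMulLog (w i) ≤ ∑ i ∈ s, (1 - w i) :=
        sum_le_sum fun i hi => negMulLog_le_one_sub_self (hw i hi)
    _ = 0 := by simp [sum_sub_distrib, hsum]

lemma sum_negMulLog_mul_le {ι : Type*} {s : Finset ι} {w : ι → ℝ}
    (hw : ∀ i ∈ s, 0 ≤ w i) (hsum : ∑ i ∈ s, w i = #s) {y : ℝ} (hy : 0 ≤ y) :
    ∑ i ∈ s, negMulLog (w i * y) ≤ #s * negMulLog y := by
  simp only [negMulLog_mul, sum_add_distrib, ← mul_sum, ← sum_mul, hsum]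
  nlinarith [sum_negMulLog_nonpos hw hsum]

section Density

variable {f : ℝ → ℝ}

lemma cdfOf_nonneg (hf_nonneg : ∀ x, 0 ≤ f x) (x : ℝ) : 0 ≤ cdfOf f x :=
  setIntegral_nonneg measurableSet_Iic fun t _ => hf_nonneg t

lemma cdfOf_le_one (hf_nonneg : ∀ x, 0 ≤ f x) (hf_int : ∫ x, f x = 1) (x : ℝ) :
    cdfOf f x ≤ 1 := by
  have hf : Integrable f := by
    by_contra h
    simp [integral_undef h] at hf_int
  exact hf_int ▸ setIntegral_le_integral hf (.of_forall hf_nonneg)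

end Density

lemma osDen_one_one (f : ℝ → ℝ) : osDen f 1 1 = f := by
  funext x
  simp [osDen]

lemma shannonH_eq_integral_negMulLog (g : ℝ → ℝ) :
    shannonH g = ∫ x, negMulLog (g x) := by
  simp [shannonH, negMulLog, ← integral_neg]

lemma MeasureTheory.Integrable.negMulLog_comp {α : Type*} [MeasurableSpace α] {μ : Measure α}
    {g : α → ℝ}
    (h : Integrable (fun x => g x * log (g x)) μ) : Integrable (fun x => negMulLog (g x)) μ := by
  simpa [negMulLog] using h.neg

theorem shannon_entropy_RSS_le_SRS_general (n : ℕ) (f : ℝ → ℝ)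
    (hf_nonneg : ∀ x, 0 ≤ f x)
    (hf_int : ∫ x, f x = 1)
    (hfl : Integrable (fun x => f x * Real.log (f x)))
    (hil : ∀ i ∈ Finset.Icc 1 n,
      Integrable (fun x => osDen f n i x * Real.log (osDen f n i x))) :
    (∑ i ∈ Finset.Icc 1 n, shannonH (osDen f n i)) ≤ (n : ℝ) * shannonH f ∧
      (n = 1 → (∑ i ∈ Finset.Icc 1 n, shannonH (osDen f n i)) = (n : ℝ) * shannonH f) := by
  refine ⟨?_, fun hn => by subst hn; simp [osDen_one_one]⟩
  have hpointwise (x : ℝ) :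
      ∑ i ∈ Icc 1 n, negMulLog (osDen f n i x) ≤ n * negMulLog (f x) := by
    simpa [osDen_eq_orderStatWeight_mul] using
      sum_negMulLog_mul_le (s := Icc 1 n)
        (fun i _ => orderStatWeight_nonneg n i (cdfOf_nonneg hf_nonneg x)
          (cdfOf_le_one hf_nonneg hf_int x))
        (by simpa using sum_orderStatWeight n (cdfOf f x)) (hf_nonneg x)
  simp only [shannonH_eq_integral_negMulLog]
  rw [← integral_finsetSum _ fun i hi => (hil i hi).negMulLog_comp, ← integral_const_mul]
  exact integral_mono (integrable_finsetSum _ fun i hi => (hil i hi).negMulLog_comp)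
    (hfl.negMulLog_comp.const_mul _) hpointwise

/-- The Shannon entropy of a perfect ranked set sample of size `n` is at most the Shannon
entropy of a simple random sample of the same size, with equality when `n = 1`. -/
theorem shannon_entropy_RSS_le_SRS (n : ℕ) (hn : 1 ≤ n) (f : ℝ → ℝ)
    (hf_meas : Measurable f) (hf_nonneg : ∀ x, 0 ≤ f x)
    (hf_int : ∫ x, f x = 1)
    (hfl : Integrable (fun x => f x * Real.log (f x)))
    (hil : ∀ i ∈ Finset.Icc 1 n,
      Integrable (fun x => osDen f n i x * Real.log (osDen f n i x))) :
    (∑ i ∈ Finset.Icc 1 n, shannonH (osDen f n i)) ≤ (n : ℝ) * shannonH f ∧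
      (n = 1 → (∑ i ∈ Finset.Icc 1 n, shannonH (osDen f n i)) = (n : ℝ) * shannonH f) :=
  shannon_entropy_RSS_le_SRS_general n f hf_nonneg hf_int hfl hil
end

section
/- Let n ≥ 1 and let p be an n×n doubly stochastic matrix with nonnegative entries. Suppose f·log f and each f_[i]·log f_[i] are integrable. Then the Shannon entropy of an imperfect ranked set sample of size n is at most that of a simple random sample of the same size: Σ_{i=1}^n H(f_[i]) ≤ n·H(f). Moreover, if p_{i,r} = 1/n for all i, r (random ranking), then equality holds. -/
open MeasureTheory Real

/-- Judgement order statistic density for an imperfect ranked set sample: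
`f_[i](x) = Σ_{r=1}^n p_{i,r}·f_(r)(x)`. -/
noncomputable def impDen (f : ℝ → ℝ) (n : ℕ) (p : ℕ → ℕ → ℝ) (i : ℕ) (x : ℝ) : ℝ :=
  ∑ r ∈ Finset.Icc 1 n, p i r * osDen f n r x

lemma sum_coeff (n : ℕ) (hn : 1 ≤ n) (t : ℝ) :
    ∑ r ∈ Finset.Icc 1 n, (r : ℝ) * (n.choose r : ℝ) * t ^ (r - 1) * (1 - t) ^ (n - r)
      = (n : ℝ) := by
  obtain ⟨m, rfl⟩ := Nat.exists_eq_add_of_le hn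
  rw [← Finset.Ico_add_one_right_eq_Icc, Finset.sum_Ico_eq_sum_range]
  have hrange : 1 + m + 1 - 1 = m + 1 := by omega
  rw [hrange]
  have key : ∀ i ∈ Finset.range (m + 1),
      ((1 + i : ℕ) : ℝ) * ((1 + m).choose (1 + i) : ℝ) * t ^ (1 + i - 1) *
        (1 - t) ^ (1 + m - (1 + i))
      = ((1 + m : ℕ) : ℝ) * (t ^ i * (1 - t) ^ (m - i) * (m.choose i : ℝ)) := by
    intro i _
    have h := Nat.add_one_mul_choose_eq m i
    have h' : ((m + 1) * m.choose i : ℕ) = ((m + 1).choose (i + 1) * (i + 1) : ℕ) := by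
      simpa [Nat.succ_eq_add_one] using h
    have hc : ((m + 1 : ℕ) : ℝ) * (m.choose i : ℝ)
        = ((m + 1).choose (i + 1) : ℝ) * ((i + 1 : ℕ) : ℝ) := by exact_mod_cast h'
    have e1 : 1 + i - 1 = i := by omega
    have e2 : 1 + m - (1 + i) = m - i := by omega
    have e3 : 1 + m = m + 1 := by omega
    have e4 : 1 + i = i + 1 := by omega
    rw [e1, e2, e3, e4]
    push_cast
    push_cast at hc
    linear_combination (-(t ^ i * (1 - t) ^ (m - i))) * hc
  rw [Finset.sum_congr rfl key, ← Finset.mul_sum]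
  have hb := add_pow t (1 - t) m
  have : t + (1 - t) = 1 := by ring
  rw [this, one_pow] at hb
  rw [← hb]
  push_cast
  ring

lemma sum_osDen (n : ℕ) (hn : 1 ≤ n) (f : ℝ → ℝ) (x : ℝ) :
    ∑ r ∈ Finset.Icc 1 n, osDen f n r x = (n : ℝ) * f x := by
  have h := sum_coeff n hn (cdfOf f x)
  calc ∑ r ∈ Finset.Icc 1 n, osDen f n r x
      = (∑ r ∈ Finset.Icc 1 n,
          (r : ℝ) * (n.choose r : ℝ) * (cdfOf f x) ^ (r - 1) * (1 - cdfOf f x) ^ (n - r)) * f x := by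
        rw [Finset.sum_mul]; rfl
    _ = (n : ℝ) * f x := by rw [h]

lemma jensen_aux (n : ℕ) (hn : 1 ≤ n) (a : ℕ → ℝ) (ha : ∀ i ∈ Finset.Icc 1 n, 0 ≤ a i)
    (c : ℝ) (hc : ∑ i ∈ Finset.Icc 1 n, a i = (n : ℝ) * c) :
    (n : ℝ) * (c * Real.log c) ≤ ∑ i ∈ Finset.Icc 1 n, a i * Real.log (a i) := by
  have hn0 : (0 : ℝ) < n := by exact_mod_cast hn
  have hcard : (Finset.Icc 1 n).card = n := by simp
  have hw : ∑ _i ∈ Finset.Icc 1 n, (1 / (n : ℝ)) = 1 := by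
    rw [Finset.sum_const, hcard, nsmul_eq_mul]; field_simp
  have hj := Real.convexOn_mul_log.map_sum_le (t := Finset.Icc 1 n)
      (w := fun _ => 1 / (n : ℝ)) (p := a)
      (fun i _ => by positivity) hw (fun i hi => ha i hi)
  have hsum : ∑ i ∈ Finset.Icc 1 n, (1 / (n : ℝ)) * a i = c := by
    rw [← Finset.mul_sum, hc]
    field_simp
  simp only [smul_eq_mul] at hj
  rw [hsum] at hj
  have h2 : ∑ x ∈ Finset.Icc 1 n, 1 / (n : ℝ) * (a x * Real.log (a x))
      = (1 / (n : ℝ)) * ∑ i ∈ Finset.Icc 1 n, a i * Real.log (a i) := by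
    rw [Finset.mul_sum]
  rw [h2] at hj
  have := mul_le_mul_of_nonneg_left hj (le_of_lt hn0)
  calc (n : ℝ) * (c * Real.log c) ≤ (n : ℝ) * ((1 / (n : ℝ)) * ∑ i ∈ Finset.Icc 1 n, a i * Real.log (a i)) := this
    _ = ∑ i ∈ Finset.Icc 1 n, a i * Real.log (a i) := by field_simp

/-- The Shannon entropy of an imperfect ranked set sample of size `n` is at most that of a
simple random sample of the same size, with equality under random ranking
(`p_{i,r} = 1/n` for all `i, r`). -/
theorem shannon_entropy_imperfect_RSS_le_SRS (n : ℕ) (hn : 1 ≤ n) (f : ℝ → ℝ)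
    (hf_meas : Measurable f) (hf_nonneg : ∀ x, 0 ≤ f x)
    (hf_int : ∫ x, f x = 1)
    (p : ℕ → ℕ → ℝ)
    (hp_nonneg : ∀ i ∈ Finset.Icc 1 n, ∀ r ∈ Finset.Icc 1 n, 0 ≤ p i r)
    (hp_row : ∀ i ∈ Finset.Icc 1 n, ∑ r ∈ Finset.Icc 1 n, p i r = 1)
    (hp_col : ∀ r ∈ Finset.Icc 1 n, ∑ i ∈ Finset.Icc 1 n, p i r = 1)
    (hfl : Integrable (fun x => f x * Real.log (f x)))
    (hil : ∀ i ∈ Finset.Icc 1 n,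
      Integrable (fun x => impDen f n p i x * Real.log (impDen f n p i x))) :
    (∑ i ∈ Finset.Icc 1 n, shannonH (impDen f n p i)) ≤ (n : ℝ) * shannonH f ∧
      ((∀ i ∈ Finset.Icc 1 n, ∀ r ∈ Finset.Icc 1 n, p i r = 1 / n) →
        (∑ i ∈ Finset.Icc 1 n, shannonH (impDen f n p i)) = (n : ℝ) * shannonH f) := by
  have hf_integrable : Integrable f := by
    by_contra h
    rw [integral_undef h] at hf_int
    norm_num at hf_int
  have hcdf0 : ∀ x, 0 ≤ cdfOf f x := fun x =>
    setIntegral_nonneg measurableSet_Iic (fun t _ => hf_nonneg t)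
  have hcdf1 : ∀ x, cdfOf f x ≤ 1 := by
    intro x
    rw [← hf_int]
    exact setIntegral_le_integral hf_integrable (Filter.Eventually.of_forall hf_nonneg)
  have hos_nonneg : ∀ r x, 0 ≤ osDen f n r x := by
    intro r x
    unfold osDen
    have h1 := hcdf0 x
    have h2 := hcdf1 x
    have h3 : 0 ≤ 1 - cdfOf f x := by linarith
    exact mul_nonneg (mul_nonneg (mul_nonneg (mul_nonneg (by positivity) (by positivity))
      (pow_nonneg h1 _)) (pow_nonneg h3 _)) (hf_nonneg x)
  have himp_nonneg : ∀ i ∈ Finset.Icc 1 n, ∀ x, 0 ≤ impDen f n p i x := by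
    intro i hi x
    exact Finset.sum_nonneg fun r hr => mul_nonneg (hp_nonneg i hi r hr) (hos_nonneg r x)
  -- key pointwise sum identity
  have hsum_imp : ∀ x, ∑ i ∈ Finset.Icc 1 n, impDen f n p i x = (n : ℝ) * f x := by
    intro x
    unfold impDen
    rw [Finset.sum_comm]
    have : ∀ r ∈ Finset.Icc 1 n,
        ∑ i ∈ Finset.Icc 1 n, p i r * osDen f n r x = osDen f n r x := by
      intro r hr
      rw [← Finset.sum_mul, hp_col r hr, one_mul]
    rw [Finset.sum_congr rfl this, sum_osDen n hn f x]
  -- pointwise Jensen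
  have hpt : ∀ x, (n : ℝ) * (f x * Real.log (f x))
      ≤ ∑ i ∈ Finset.Icc 1 n, impDen f n p i x * Real.log (impDen f n p i x) := by
    intro x
    exact jensen_aux n hn (fun i => impDen f n p i x)
      (fun i hi => himp_nonneg i hi x) (f x) (hsum_imp x)
  have hGint : Integrable (fun x => ∑ i ∈ Finset.Icc 1 n,
      impDen f n p i x * Real.log (impDen f n p i x)) :=
    integrable_finset_sum _ (fun i hi => hil i hi)
  have hFint : Integrable (fun x => (n : ℝ) * (f x * Real.log (f x))) := hfl.const_mul _
  have hmono := integral_mono hFint hGint hpt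
  constructor
  · -- inequality
    have h1 : ∑ i ∈ Finset.Icc 1 n, shannonH (impDen f n p i)
        = -∫ x, ∑ i ∈ Finset.Icc 1 n, impDen f n p i x * Real.log (impDen f n p i x) := by
      rw [integral_finset_sum _ (fun i hi => hil i hi)]
      simp [shannonH, Finset.sum_neg_distrib]
    have h2 : (n : ℝ) * shannonH f = -∫ x, (n : ℝ) * (f x * Real.log (f x)) := by
      rw [integral_const_mul]
      simp [shannonH]
    rw [h1, h2]
    linarith [hmono]
  · -- equality under random ranking
    intro hpr
    have heq : ∀ i ∈ Finset.Icc 1 n, impDen f n p i = f := by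
      intro i hi
      funext x
      unfold impDen
      have : ∀ r ∈ Finset.Icc 1 n, p i r * osDen f n r x = (1 / (n : ℝ)) * osDen f n r x := by
        intro r hr
        rw [hpr i hi r hr]
      rw [Finset.sum_congr rfl this, ← Finset.mul_sum, sum_osDen n hn f x]
      have hn0 : (n : ℝ) ≠ 0 := by positivity
      field_simp
    have : ∑ i ∈ Finset.Icc 1 n, shannonH (impDen f n p i)
        = ∑ i ∈ Finset.Icc 1 n, shannonH f :=
      Finset.sum_congr rfl fun i hi => by rw [heq i hi]
    rw [this, Finset.sum_const]
    simp [nsmul_eq_mul]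
end

section
/- Let n ≥ 1 and let p be an n×n doubly stochastic matrix with nonnegative entries. Suppose each f_(r)·log f_(r) and each f_[i]·log f_[i] are integrable. Then the Shannon entropy of a perfect ranked set sample is at most that of an imperfect ranked set sample of the same size: Σ_{i=1}^n H(f_(i)) ≤ Σ_{i=1}^n H(f_[i]), with equality when ranking is perfect (p the identity matrix). -/
open MeasureTheory Real

/-- The Shannon entropy of a perfect ranked set sample of size `n` is at most that of an
imperfect ranked set sample of the same size, with equality when ranking is perfect
(`p` the identity matrix). -/
theorem shannon_entropy_perfect_RSS_le_imperfect_RSS (n : ℕ) (hn : 1 ≤ n) (f : ℝ → ℝ)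
    (hf_meas : Measurable f) (hf_nonneg : ∀ x, 0 ≤ f x)
    (hf_int : ∫ x, f x = 1)
    (p : ℕ → ℕ → ℝ)
    (hp_nonneg : ∀ i ∈ Finset.Icc 1 n, ∀ r ∈ Finset.Icc 1 n, 0 ≤ p i r)
    (hp_row : ∀ i ∈ Finset.Icc 1 n, ∑ r ∈ Finset.Icc 1 n, p i r = 1)
    (hp_col : ∀ r ∈ Finset.Icc 1 n, ∑ i ∈ Finset.Icc 1 n, p i r = 1)
    (hol : ∀ r ∈ Finset.Icc 1 n,
      Integrable (fun x => osDen f n r x * Real.log (osDen f n r x)))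
    (hil : ∀ i ∈ Finset.Icc 1 n,
      Integrable (fun x => impDen f n p i x * Real.log (impDen f n p i x))) :
    (∑ i ∈ Finset.Icc 1 n, shannonH (osDen f n i))
        ≤ ∑ i ∈ Finset.Icc 1 n, shannonH (impDen f n p i) ∧
      ((∀ i ∈ Finset.Icc 1 n, ∀ r ∈ Finset.Icc 1 n, p i r = if i = r then 1 else 0) →
        (∑ i ∈ Finset.Icc 1 n, shannonH (osDen f n i))
          = ∑ i ∈ Finset.Icc 1 n, shannonH (impDen f n p i)) := by
  classical
  -- f is integrable
  have hfint : Integrable f := by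
    by_contra h
    rw [MeasureTheory.integral_undef h] at hf_int
    norm_num at hf_int
  -- cdf bounds
  have hcdf0 : ∀ x, 0 ≤ cdfOf f x := fun x =>
    MeasureTheory.integral_nonneg fun t => hf_nonneg t
  have hcdf1 : ∀ x, cdfOf f x ≤ 1 := by
    intro x
    have := MeasureTheory.setIntegral_le_integral (s := Set.Iic x) hfint
      (Filter.Eventually.of_forall hf_nonneg)
    simpa [cdfOf, hf_int] using this
  -- order statistic densities are nonnegative
  have hos_nonneg : ∀ r x, 0 ≤ osDen f n r x := by
    intro r x
    unfold osDen
    have h1 : (0:ℝ) ≤ (r:ℝ) * (n.choose r : ℝ) := by positivity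
    have h2 : (0:ℝ) ≤ (cdfOf f x) ^ (r - 1) := pow_nonneg (hcdf0 x) _
    have h3 : (0:ℝ) ≤ (1 - cdfOf f x) ^ (n - r) := pow_nonneg (by linarith [hcdf1 x]) _
    have := hf_nonneg x
    positivity
  -- key pointwise Jensen inequality
  have key : ∀ i ∈ Finset.Icc 1 n, ∀ x,
      impDen f n p i x * Real.log (impDen f n p i x)
        ≤ ∑ r ∈ Finset.Icc 1 n, p i r * (osDen f n r x * Real.log (osDen f n r x)) := by
    intro i hi x
    have := Real.convexOn_mul_log.map_sum_le (t := Finset.Icc 1 n)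
      (w := p i) (p := fun r => osDen f n r x)
      (fun r hr => hp_nonneg i hi r hr) (hp_row i hi)
      (fun r hr => hos_nonneg r x)
    simpa [impDen, smul_eq_mul] using this
  -- integral version
  have keyint : ∀ i ∈ Finset.Icc 1 n,
      ∑ r ∈ Finset.Icc 1 n, p i r * shannonH (osDen f n r) ≤ shannonH (impDen f n p i) := by
    intro i hi
    have hintR : Integrable (fun x => ∑ r ∈ Finset.Icc 1 n,
        p i r * (osDen f n r x * Real.log (osDen f n r x))) :=
      MeasureTheory.integrable_finset_sum _ (fun r hr => (hol r hr).const_mul _)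
    have h1 : (∫ x, impDen f n p i x * Real.log (impDen f n p i x))
        ≤ ∫ x, ∑ r ∈ Finset.Icc 1 n, p i r * (osDen f n r x * Real.log (osDen f n r x)) :=
      MeasureTheory.integral_mono (hil i hi) hintR (fun x => key i hi x)
    rw [MeasureTheory.integral_finset_sum _ (fun r hr => (hol r hr).const_mul _)] at h1
    simp_rw [MeasureTheory.integral_const_mul] at h1
    unfold shannonH
    simp_rw [mul_neg]
    rw [Finset.sum_neg_distrib]
    linarith
  constructor
  · have step : ∑ i ∈ Finset.Icc 1 n, ∑ r ∈ Finset.Icc 1 n, p i r * shannonH (osDen f n r)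
        ≤ ∑ i ∈ Finset.Icc 1 n, shannonH (impDen f n p i) :=
      Finset.sum_le_sum keyint
    have eq1 : ∑ i ∈ Finset.Icc 1 n, ∑ r ∈ Finset.Icc 1 n, p i r * shannonH (osDen f n r)
        = ∑ r ∈ Finset.Icc 1 n, shannonH (osDen f n r) := by
      rw [Finset.sum_comm]
      refine Finset.sum_congr rfl fun r hr => ?_
      rw [← Finset.sum_mul, hp_col r hr, one_mul]
    linarith [step, eq1.ge, eq1.le]
  · intro hid
    refine Finset.sum_congr rfl fun i hi => ?_
    congr 1
    funext x
    unfold impDen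
    rw [Finset.sum_congr rfl (fun r hr => by rw [hid i hi r hr, ite_mul, one_mul, zero_mul])]
    rw [Finset.sum_ite_eq]
    simp [hi]
end

section
/- Let n ≥ 1, 0 < α < 1, and let p be an n×n doubly stochastic matrix with nonnegative entries. Suppose ∫ f_(j)^α and ∫ f_[i]^α are finite and positive for all i, j. Then the Rényi entropy of a perfect ranked set sample is at most that of an imperfect ranked set sample of the same size: Σ_{i=1}^n H_α(f_(i)) ≤ Σ_{i=1}^n H_α(f_[i]). -/
open MeasureTheory Real

/-- Rényi entropy of order `α` of a density `g`: `H_α(g) = (1/(1-α))·log ∫ g^α`. -/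
noncomputable def renyiH (α : ℝ) (g : ℝ → ℝ) : ℝ :=
  (1 / (1 - α)) * Real.log (∫ x, g x ^ α)

/-- For `0 < α < 1`, the Rényi entropy of a perfect ranked set sample is at most that of an
imperfect ranked set sample of the same size. -/
theorem renyi_perfect_RSS_le_imperfect_RSS (n : ℕ) (hn : 1 ≤ n) (α : ℝ)
    (hα0 : 0 < α) (hα1 : α < 1) (f : ℝ → ℝ)
    (hf_meas : Measurable f) (hf_nonneg : ∀ x, 0 ≤ f x)
    (hf_int : ∫ x, f x = 1)
    (p : ℕ → ℕ → ℝ)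
    (hp_nonneg : ∀ i ∈ Finset.Icc 1 n, ∀ r ∈ Finset.Icc 1 n, 0 ≤ p i r)
    (hp_row : ∀ i ∈ Finset.Icc 1 n, ∑ r ∈ Finset.Icc 1 n, p i r = 1)
    (hp_col : ∀ r ∈ Finset.Icc 1 n, ∑ i ∈ Finset.Icc 1 n, p i r = 1)
    (hoi : ∀ j ∈ Finset.Icc 1 n, Integrable (fun x => osDen f n j x ^ α))
    (hop : ∀ j ∈ Finset.Icc 1 n, 0 < ∫ x, osDen f n j x ^ α)
    (hii : ∀ i ∈ Finset.Icc 1 n, Integrable (fun x => impDen f n p i x ^ α))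
    (hip : ∀ i ∈ Finset.Icc 1 n, 0 < ∫ x, impDen f n p i x ^ α) :
    (∑ i ∈ Finset.Icc 1 n, renyiH α (osDen f n i))
      ≤ ∑ i ∈ Finset.Icc 1 n, renyiH α (impDen f n p i) := by
  have hfi : Integrable f := by
    by_contra h
    rw [integral_undef h] at hf_int; norm_num at hf_int
  have hcdf0 : ∀ x, 0 ≤ cdfOf f x := fun x =>
    setIntegral_nonneg measurableSet_Iic fun t _ => hf_nonneg t
  have hcdf1 : ∀ x, cdfOf f x ≤ 1 := by
    intro x
    rw [← hf_int]
    exact setIntegral_le_integral hfi (Filter.Eventually.of_forall hf_nonneg)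
  have hos_nonneg : ∀ j x, 0 ≤ osDen f n j x := by
    intro j x
    unfold osDen
    have h1 := hcdf0 x
    have h2 := hcdf1 x
    apply mul_nonneg _ (hf_nonneg x)
    apply mul_nonneg _ (pow_nonneg (by linarith) _)
    apply mul_nonneg _ (pow_nonneg h1 _)
    positivity
  set I := fun j => ∫ x, osDen f n j x ^ α with hI
  have key : ∀ i ∈ Finset.Icc 1 n, ∑ r ∈ Finset.Icc 1 n, p i r * Real.log (I r)
      ≤ Real.log (∫ x, impDen f n p i x ^ α) := by
    intro i hi
    have hrow := hp_row i hi
    have hpnn := hp_nonneg i hi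
    have hpt : ∀ x, ∑ r ∈ Finset.Icc 1 n, p i r * osDen f n r x ^ α
        ≤ impDen f n p i x ^ α := by
      intro x
      have hc : ConcaveOn ℝ (Set.Ici 0) fun y : ℝ => y ^ α :=
        Real.concaveOn_rpow hα0.le hα1.le
      have := hc.le_map_sum hpnn hrow (fun r _ => Set.mem_Ici.2 (hos_nonneg r x))
      simpa [impDen, smul_eq_mul] using this
    have hintL : Integrable (fun x => ∑ r ∈ Finset.Icc 1 n, p i r * osDen f n r x ^ α) :=
      integrable_finset_sum _ fun r hr => ((hoi r hr).const_mul _)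
    have hIle : ∑ r ∈ Finset.Icc 1 n, p i r * I r ≤ ∫ x, impDen f n p i x ^ α := by
      have h := integral_mono hintL (hii i hi) hpt
      rw [integral_finset_sum _ (fun r hr => ((hoi r hr).const_mul _))] at h
      simp only [MeasureTheory.integral_const_mul] at h
      simpa [hI] using h
    obtain ⟨r0, hr0, hpr0⟩ : ∃ r ∈ Finset.Icc 1 n, 0 < p i r := by
      by_contra h
      push_neg at h
      have hz : ∑ r ∈ Finset.Icc 1 n, p i r = 0 :=
        Finset.sum_eq_zero fun r hr => le_antisymm (h r hr) (hpnn r hr)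
      rw [hrow] at hz; norm_num at hz
    have hSpos : 0 < ∑ r ∈ Finset.Icc 1 n, p i r * I r := by
      refine lt_of_lt_of_le (mul_pos hpr0 (hop r0 hr0)) ?_
      exact Finset.single_le_sum (fun r hr => mul_nonneg (hpnn r hr) (hop r hr).le) hr0
    have hlog : ∑ r ∈ Finset.Icc 1 n, p i r * Real.log (I r)
        ≤ Real.log (∑ r ∈ Finset.Icc 1 n, p i r * I r) := by
      have := (strictConcaveOn_log_Ioi.concaveOn).le_map_sum hpnn hrow
        (fun r hr => Set.mem_Ioi.2 (hop r hr))
      simpa [smul_eq_mul] using this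
    exact hlog.trans (Real.log_le_log hSpos hIle)
  have hsum : ∑ r ∈ Finset.Icc 1 n, Real.log (I r)
      = ∑ i ∈ Finset.Icc 1 n, ∑ r ∈ Finset.Icc 1 n, p i r * Real.log (I r) := by
    rw [Finset.sum_comm]
    refine Finset.sum_congr rfl fun r hr => ?_
    rw [← Finset.sum_mul, hp_col r hr, one_mul]
  have h1α : 0 < 1 - α := by linarith
  unfold renyiH
  rw [← Finset.mul_sum, ← Finset.mul_sum]
  apply mul_le_mul_of_nonneg_left _ (by positivity)
  calc ∑ r ∈ Finset.Icc 1 n, Real.log (∫ x, osDen f n r x ^ α)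
      = ∑ i ∈ Finset.Icc 1 n, ∑ r ∈ Finset.Icc 1 n, p i r * Real.log (I r) := hsum
    _ ≤ ∑ i ∈ Finset.Icc 1 n, Real.log (∫ x, impDen f n p i x ^ α) :=
        Finset.sum_le_sum key
end

section
/- Let n ≥ 1, 0 < α < 1, and let p be an n×n doubly stochastic matrix with nonnegative entries. Suppose ∫ f^α and each ∫ f_[i]^α are finite and positive. Then the Rényi entropy of an imperfect ranked set sample is at most that of a simple random sample of the same size: Σ_{i=1}^n H_α(f_[i]) ≤ n·H_α(f). -/
open MeasureTheory Real

/-- Key polynomial identity behind the fact that order-statistic densities average to the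
parent density. -/
lemma key_sum (m : ℕ) (y : ℝ) :
    ∑ r ∈ Finset.Icc 1 (m + 1),
      (r : ℝ) * (((m + 1).choose r : ℕ) : ℝ) * y ^ (r - 1) * (1 - y) ^ (m + 1 - r)
      = ((m : ℝ) + 1) := by
  rw [← Finset.Ico_add_one_right_eq_Icc, Finset.sum_Ico_eq_sum_range]
  have hcard : m + 1 + 1 - 1 = m + 1 := by omega
  rw [hcard]
  have hterm : ∀ i ∈ Finset.range (m + 1),
      ((1 + i : ℕ) : ℝ) * (((m + 1).choose (1 + i) : ℕ) : ℝ) * y ^ (1 + i - 1)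
        * (1 - y) ^ (m + 1 - (1 + i))
      = ((m : ℝ) + 1) * (y ^ i * (1 - y) ^ (m - i) * (m.choose i : ℝ)) := by
    intro i hi
    have h1 : 1 + i - 1 = i := by omega
    have h2 : m + 1 - (1 + i) = m - i := by omega
    have h3 : (m + 1) * m.choose i = (m + 1).choose (i + 1) * (i + 1) :=
      Nat.add_one_mul_choose_eq m i
    have h3' : ((m : ℝ) + 1) * (m.choose i : ℝ)
        = (((m + 1).choose (i + 1) : ℕ) : ℝ) * ((i : ℝ) + 1) := by exact_mod_cast h3
    have h4 : (1 + i : ℕ) = i + 1 := by omega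
    rw [h1, h2, h4]
    push_cast
    linear_combination (-(y ^ i * (1 - y) ^ (m - i))) * h3'
  rw [Finset.sum_congr rfl hterm, ← Finset.mul_sum, ← add_pow y (1 - y) m]
  ring_nf

/-- For `0 < α < 1`, the Rényi entropy of an imperfect ranked set sample is at most that of a
simple random sample of the same size. -/
theorem renyi_imperfect_RSS_le_SRS (n : ℕ) (hn : 1 ≤ n) (α : ℝ)
    (hα0 : 0 < α) (hα1 : α < 1) (f : ℝ → ℝ)
    (hf_meas : Measurable f) (hf_nonneg : ∀ x, 0 ≤ f x)
    (hf_int : ∫ x, f x = 1)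
    (p : ℕ → ℕ → ℝ)
    (hp_nonneg : ∀ i ∈ Finset.Icc 1 n, ∀ r ∈ Finset.Icc 1 n, 0 ≤ p i r)
    (hp_row : ∀ i ∈ Finset.Icc 1 n, ∑ r ∈ Finset.Icc 1 n, p i r = 1)
    (hp_col : ∀ r ∈ Finset.Icc 1 n, ∑ i ∈ Finset.Icc 1 n, p i r = 1)
    (hfi : Integrable (fun x => f x ^ α)) (hfp : 0 < ∫ x, f x ^ α)
    (hii : ∀ i ∈ Finset.Icc 1 n, Integrable (fun x => impDen f n p i x ^ α))
    (hip : ∀ i ∈ Finset.Icc 1 n, 0 < ∫ x, impDen f n p i x ^ α) :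
    (∑ i ∈ Finset.Icc 1 n, renyiH α (impDen f n p i)) ≤ (n : ℝ) * renyiH α f := by
  have hnR : (0 : ℝ) < n := by exact_mod_cast hn
  -- f is integrable
  have hfInt : Integrable f := by
    by_contra h
    rw [integral_undef h] at hf_int
    norm_num at hf_int
  -- cdf bounds
  have hF0 : ∀ x, 0 ≤ cdfOf f x := fun x =>
    setIntegral_nonneg measurableSet_Iic (fun t _ => hf_nonneg t)
  have hF1 : ∀ x, cdfOf f x ≤ 1 := by
    intro x
    rw [← hf_int]
    exact setIntegral_le_integral hfInt (Filter.Eventually.of_forall hf_nonneg)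
  -- nonnegativity of densities
  have hos_nonneg : ∀ r x, 0 ≤ osDen f n r x := by
    intro r x
    unfold osDen
    have h0 := hF0 x; have h1 := hF1 x; have h2 := hf_nonneg x
    have h3 : (0:ℝ) ≤ 1 - cdfOf f x := by linarith
    positivity
  have himp_nonneg : ∀ i ∈ Finset.Icc 1 n, ∀ x, 0 ≤ impDen f n p i x := by
    intro i hi x
    exact Finset.sum_nonneg fun r hr => mul_nonneg (hp_nonneg i hi r hr) (hos_nonneg r x)
  -- the densities sum to n·f
  obtain ⟨m, rfl⟩ : ∃ m, n = m + 1 := ⟨n - 1, by omega⟩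
  have hnR' : ((m + 1 : ℕ) : ℝ) = (m : ℝ) + 1 := by push_cast; ring
  have hos_sum : ∀ x, ∑ r ∈ Finset.Icc 1 (m + 1), osDen f (m + 1) r x
      = ((m : ℝ) + 1) * f x := by
    intro x
    have hterm : ∀ r, osDen f (m + 1) r x
        = ((r : ℝ) * (((m + 1).choose r : ℕ) : ℝ) * (cdfOf f x) ^ (r - 1)
          * (1 - cdfOf f x) ^ (m + 1 - r)) * f x := fun r => rfl
    simp_rw [hterm, ← Finset.sum_mul, key_sum m (cdfOf f x)]
  have himp_sum : ∀ x, ∑ i ∈ Finset.Icc 1 (m + 1), impDen f (m + 1) p i x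
      = ((m : ℝ) + 1) * f x := by
    intro x
    unfold impDen
    rw [Finset.sum_comm]
    calc ∑ r ∈ Finset.Icc 1 (m + 1), ∑ i ∈ Finset.Icc 1 (m + 1), p i r * osDen f (m + 1) r x
        = ∑ r ∈ Finset.Icc 1 (m + 1), (∑ i ∈ Finset.Icc 1 (m + 1), p i r)
            * osDen f (m + 1) r x := by
          simp_rw [Finset.sum_mul]
      _ = ∑ r ∈ Finset.Icc 1 (m + 1), osDen f (m + 1) r x := by
          refine Finset.sum_congr rfl fun r hr => ?_
          rw [hp_col r hr, one_mul]
      _ = ((m : ℝ) + 1) * f x := hos_sum x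
  -- weights 1/n
  have hw : ∀ i ∈ Finset.Icc 1 (m + 1), (0 : ℝ) ≤ 1 / ((m + 1 : ℕ) : ℝ) := fun _ _ => by
    positivity
  have hw' : ∑ _i ∈ Finset.Icc 1 (m + 1), (1 / ((m + 1 : ℕ) : ℝ)) = 1 := by
    rw [Finset.sum_const, Nat.card_Icc]
    simp only [Nat.add_sub_cancel, nsmul_eq_mul]
    field_simp
  -- pointwise concavity (power mean inequality)
  have hpoint : ∀ x, ∑ i ∈ Finset.Icc 1 (m + 1),
      (1 / ((m + 1 : ℕ) : ℝ)) * impDen f (m + 1) p i x ^ α ≤ f x ^ α := by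
    intro x
    have hz : ∀ i ∈ Finset.Icc 1 (m + 1), (0 : ℝ) ≤ impDen f (m + 1) p i x ^ α := fun i hi =>
      Real.rpow_nonneg (himp_nonneg i hi x) _
    have hp1 : (1 : ℝ) ≤ 1 / α := by
      rw [le_div_iff₀ hα0]; linarith
    have key := Real.arith_mean_le_rpow_mean (Finset.Icc 1 (m + 1))
      (fun _ => 1 / ((m + 1 : ℕ) : ℝ)) (fun i => impDen f (m + 1) p i x ^ α)
      hw hw' hz hp1
    rw [one_div_one_div] at key
    have e1 : (∑ i ∈ Finset.Icc 1 (m + 1),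
        (1 / ((m + 1 : ℕ) : ℝ)) * (impDen f (m + 1) p i x ^ α) ^ ((1 : ℝ) / α)) = f x := by
      have hterm : ∀ i ∈ Finset.Icc 1 (m + 1),
          (1 / ((m + 1 : ℕ) : ℝ)) * (impDen f (m + 1) p i x ^ α) ^ ((1 : ℝ) / α)
          = (1 / ((m + 1 : ℕ) : ℝ)) * impDen f (m + 1) p i x := by
        intro i hi
        rw [← Real.rpow_mul (himp_nonneg i hi x), mul_one_div, div_self (ne_of_gt hα0),
          Real.rpow_one]
      rw [Finset.sum_congr rfl hterm, ← Finset.mul_sum, himp_sum x, hnR']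
      have hne : (m : ℝ) + 1 ≠ 0 := by positivity
      field_simp
    rw [e1] at key
    exact key
  -- integrate the pointwise inequality
  have hintsum : Integrable (fun x => ∑ i ∈ Finset.Icc 1 (m + 1),
      (1 / ((m + 1 : ℕ) : ℝ)) * impDen f (m + 1) p i x ^ α) :=
    integrable_finset_sum _ (fun i hi => ((hii i hi).const_mul _))
  have hmono := integral_mono hintsum hfi hpoint
  rw [integral_finset_sum _ (fun i hi => ((hii i hi).const_mul _))] at hmono
  simp_rw [integral_const_mul] at hmono
  -- Jensen for log (AM-GM)
  set A : ℕ → ℝ := fun i => ∫ x, impDen f (m + 1) p i x ^ α with hA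
  set B : ℝ := ∫ x, f x ^ α with hB
  have hlog1 : ∑ i ∈ Finset.Icc 1 (m + 1), (1 / ((m + 1 : ℕ) : ℝ)) * Real.log (A i)
      ≤ Real.log (∑ i ∈ Finset.Icc 1 (m + 1), (1 / ((m + 1 : ℕ) : ℝ)) * A i) := by
    have := strictConcaveOn_log_Ioi.concaveOn.le_map_sum hw hw'
      (fun i hi => (hip i hi : A i ∈ Set.Ioi (0:ℝ)))
    simpa [smul_eq_mul] using this
  have hsumpos : 0 < ∑ i ∈ Finset.Icc 1 (m + 1), (1 / ((m + 1 : ℕ) : ℝ)) * A i := by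
    refine Finset.sum_pos (fun i hi => ?_) ⟨1, by simp⟩
    exact mul_pos (by positivity) (hip i hi)
  have hlog2 : Real.log (∑ i ∈ Finset.Icc 1 (m + 1), (1 / ((m + 1 : ℕ) : ℝ)) * A i)
      ≤ Real.log B := Real.log_le_log hsumpos hmono
  have hcomb : ∑ i ∈ Finset.Icc 1 (m + 1), (1 / ((m + 1 : ℕ) : ℝ)) * Real.log (A i)
      ≤ Real.log B := le_trans hlog1 hlog2
  rw [← Finset.mul_sum] at hcomb
  have hfinal : ∑ i ∈ Finset.Icc 1 (m + 1), Real.log (A i)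
      ≤ ((m + 1 : ℕ) : ℝ) * Real.log B := by
    have hN : (0:ℝ) < ((m + 1 : ℕ) : ℝ) := hnR
    have h := mul_le_mul_of_nonneg_left hcomb hN.le
    rwa [← mul_assoc, mul_one_div, div_self hN.ne', one_mul] at h
  -- conclude
  have hc : (0:ℝ) < 1 / (1 - α) := by
    have : (0:ℝ) < 1 - α := by linarith
    positivity
  unfold renyiH
  rw [← Finset.mul_sum]
  calc (1 / (1 - α)) * ∑ i ∈ Finset.Icc 1 (m + 1), Real.log (A i)
      ≤ (1 / (1 - α)) * (((m + 1 : ℕ) : ℝ) * Real.log B) :=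
        mul_le_mul_of_nonneg_left hfinal hc.le
    _ = ((m + 1 : ℕ) : ℝ) * ((1 / (1 - α)) * Real.log B) := by ring
end

section
/- Let n ≥ 1 and α > 1. Suppose ∫ f^α is finite and positive and each ∫ f_(i)^α is finite and positive. Then Σ_{i=1}^n H_α(f_(i)) − n·H_α(f) ≥ (α/(1-α))·n·log n. -/
open MeasureTheory Real

lemma binom_term_le_one (m j : ℕ) (hj : j ≤ m) (p : ℝ) (h0 : 0 ≤ p) (h1 : p ≤ 1) :
    (m.choose j : ℝ) * p ^ j * (1 - p) ^ (m - j) ≤ 1 := by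
  have h1p : 0 ≤ 1 - p := by linarith
  have hsum : (m.choose j : ℝ) * p ^ j * (1 - p) ^ (m - j)
      ≤ ∑ k ∈ Finset.range (m + 1), p ^ k * (1 - p) ^ (m - k) * (m.choose k : ℝ) := by
    calc (m.choose j : ℝ) * p ^ j * (1 - p) ^ (m - j)
        = p ^ j * (1 - p) ^ (m - j) * (m.choose j : ℝ) := by ring
      _ ≤ _ := Finset.single_le_sum
          (f := fun k => p ^ k * (1 - p) ^ (m - k) * (m.choose k : ℝ))
          (fun k _ => by positivity) (Finset.mem_range.mpr (Nat.lt_succ_of_le hj))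
  have hadd : (∑ k ∈ Finset.range (m + 1), p ^ k * (1 - p) ^ (m - k) * (m.choose k : ℝ))
      = (p + (1 - p)) ^ m := (add_pow p (1 - p) m).symm
  rw [hadd] at hsum
  simpa using hsum

/-- For `α > 1`, the difference between the Rényi entropies of a perfect RSS and an SRS of
size `n` is at least `(α/(1-α))·n·log n`. -/
theorem renyi_RSS_minus_SRS_lower_bound (n : ℕ) (hn : 1 ≤ n) (α : ℝ) (hα : 1 < α)
    (f : ℝ → ℝ)
    (hf_meas : Measurable f) (hf_nonneg : ∀ x, 0 ≤ f x)
    (hf_int : ∫ x, f x = 1)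
    (hfi : Integrable (fun x => f x ^ α)) (hfp : 0 < ∫ x, f x ^ α)
    (hoi : ∀ i ∈ Finset.Icc 1 n, Integrable (fun x => osDen f n i x ^ α))
    (hop : ∀ i ∈ Finset.Icc 1 n, 0 < ∫ x, osDen f n i x ^ α) :
    (α / (1 - α)) * (n : ℝ) * Real.log (n : ℝ)
      ≤ (∑ i ∈ Finset.Icc 1 n, renyiH α (osDen f n i)) - (n : ℝ) * renyiH α f := by
  have hfInt : Integrable f := by
    by_contra h
    rw [integral_undef h] at hf_int
    norm_num at hf_int
  have hF0 : ∀ x, 0 ≤ cdfOf f x := fun x =>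
    setIntegral_nonneg measurableSet_Iic (fun t _ => hf_nonneg t)
  have hF1 : ∀ x, cdfOf f x ≤ 1 := by
    intro x
    have := setIntegral_le_integral (s := Set.Iic x) hfInt
      (Filter.Eventually.of_forall hf_nonneg)
    rw [hf_int] at this
    exact this
  have hn1 : (1 : ℝ) ≤ (n : ℝ) := by exact_mod_cast hn
  have hnpos : (0 : ℝ) < n := by linarith
  have hnα : (0 : ℝ) < (n : ℝ) ^ α := rpow_pos_of_pos hnpos α
  -- pointwise bound osDen ≤ n * f
  have key : ∀ i ∈ Finset.Icc 1 n, ∀ x, osDen f n i x ≤ (n : ℝ) * f x := by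
    intro i hi x
    obtain ⟨h1i, hin⟩ := Finset.mem_Icc.mp hi
    set m := n - 1 with hm
    set j := i - 1 with hj
    have hnm : n = m + 1 := by omega
    have hij : i = j + 1 := by omega
    have hjm : j ≤ m := by omega
    have hni : n - i = m - j := by omega
    have hcoef : (i : ℝ) * (n.choose i : ℝ) = (n : ℝ) * (m.choose j : ℝ) := by
      have : (m + 1) * m.choose j = (m + 1).choose (j + 1) * (j + 1) :=
        Nat.add_one_mul_choose_eq m j
      rw [hnm, hij]
      exact_mod_cast by rw [this]; ring
    have hb := binom_term_le_one m j hjm (cdfOf f x) (hF0 x) (hF1 x)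
    have h1F : 0 ≤ 1 - cdfOf f x := by linarith [hF1 x]
    calc osDen f n i x
        = (n : ℝ) * ((m.choose j : ℝ) * (cdfOf f x) ^ j * (1 - cdfOf f x) ^ (m - j)) * f x := by
          unfold osDen
          rw [hij] at hcoef
          rw [hni, hij]
          simp only [Nat.add_sub_cancel]
          push_cast at hcoef ⊢
          linear_combination (cdfOf f x ^ j * (1 - cdfOf f x) ^ (m - j) * f x) * hcoef
      _ ≤ (n : ℝ) * 1 * f x := by
          gcongr
          exact hf_nonneg x
      _ = (n : ℝ) * f x := by ring
  -- nonnegativity of osDen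
  have hos0 : ∀ i x, 0 ≤ osDen f n i x := by
    intro i x
    have h1F : 0 ≤ 1 - cdfOf f x := by linarith [hF1 x]
    unfold osDen
    exact mul_nonneg (mul_nonneg (mul_nonneg (by positivity) (pow_nonneg (hF0 x) _))
      (pow_nonneg h1F _)) (hf_nonneg x)
  have hα0 : (0 : ℝ) ≤ α := by linarith
  -- per-i entropy bound
  have hper : ∀ i ∈ Finset.Icc 1 n,
      (α / (1 - α)) * Real.log (n : ℝ) + renyiH α f ≤ renyiH α (osDen f n i) := by
    intro i hi
    have hint : (∫ x, osDen f n i x ^ α) ≤ (n : ℝ) ^ α * ∫ x, f x ^ α := by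
      calc (∫ x, osDen f n i x ^ α)
          ≤ ∫ x, (n : ℝ) ^ α * f x ^ α := by
            refine integral_mono (hoi i hi) (hfi.const_mul _) ?_
            intro x
            calc osDen f n i x ^ α ≤ ((n : ℝ) * f x) ^ α :=
                  Real.rpow_le_rpow (hos0 i x) (key i hi x) hα0
              _ = (n : ℝ) ^ α * f x ^ α := Real.mul_rpow (le_of_lt hnpos) (hf_nonneg x)
        _ = (n : ℝ) ^ α * ∫ x, f x ^ α := integral_const_mul _ _
    have hlog : Real.log (∫ x, osDen f n i x ^ α) ≤ α * Real.log (n : ℝ) + Real.log (∫ x, f x ^ α) := by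
      calc Real.log (∫ x, osDen f n i x ^ α)
          ≤ Real.log ((n : ℝ) ^ α * ∫ x, f x ^ α) := Real.log_le_log (hop i hi) hint
        _ = α * Real.log (n : ℝ) + Real.log (∫ x, f x ^ α) := by
            rw [Real.log_mul (ne_of_gt hnα) (ne_of_gt hfp), Real.log_rpow hnpos]
    have hc : (1 / (1 - α)) < 0 := by
      apply div_neg_of_pos_of_neg one_pos
      linarith
    have := mul_le_mul_of_nonpos_left hlog (le_of_lt hc)
    unfold renyiH
    calc (α / (1 - α)) * Real.log (n : ℝ) + (1 / (1 - α)) * Real.log (∫ x, f x ^ α)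
        = (1 / (1 - α)) * (α * Real.log (n : ℝ) + Real.log (∫ x, f x ^ α)) := by ring
      _ ≤ (1 / (1 - α)) * Real.log (∫ x, osDen f n i x ^ α) := this
  have hcard : (Finset.Icc 1 n).card = n := by simp
  have hsum : ∑ i ∈ Finset.Icc 1 n, ((α / (1 - α)) * Real.log (n : ℝ) + renyiH α f)
      ≤ ∑ i ∈ Finset.Icc 1 n, renyiH α (osDen f n i) :=
    Finset.sum_le_sum hper
  rw [Finset.sum_const, hcard] at hsum
  have h2 : (n : ℝ) * ((α / (1 - α)) * Real.log (n : ℝ)) + (n : ℝ) * renyiH α f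
      ≤ ∑ i ∈ Finset.Icc 1 n, renyiH α (osDen f n i) := by
    simpa [nsmul_eq_mul, mul_add] using hsum
  nlinarith [h2]
end

section
/- For every α > 1 and every n ≥ 2, the quantity Ψ(α,n) satisfies (n·α/(1-α))·log n ≤ Ψ(α,n) < 0. -/
open Real

/-- `Ψ(α,n) = (α/(1-α))·Σ_{i=1}^n log(n·C(n-1,i-1)·((i-1)/(n-1))^(i-1)·((n-i)/(n-1))^(n-i))`,
with the convention `0^0 = 1` (natural number exponents). -/
noncomputable def Psi (α : ℝ) (n : ℕ) : ℝ :=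
  (α / (1 - α)) * ∑ i ∈ Finset.Icc 1 n,
    Real.log ((n : ℝ) * ((n - 1).choose (i - 1) : ℝ)
      * (((i : ℝ) - 1) / ((n : ℝ) - 1)) ^ (i - 1)
      * (((n : ℝ) - (i : ℝ)) / ((n : ℝ) - 1)) ^ (n - i))

lemma binom_step_up (k j m : ℕ) (hm : m < j) (hjk : j ≤ k) :
    k.choose m * j^m * (k-j)^(k-m) ≤ k.choose (m+1) * j^(m+1) * (k-j)^(k-(m+1)) := by
  apply Nat.le_of_mul_le_mul_left _ (Nat.succ_pos m)
  have h1 : k - m = (k - (m+1)) + 1 := by omega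
  have key : (m+1) * (k - j) ≤ j * (k - m) :=
    Nat.mul_le_mul hm (Nat.sub_le_sub_left hm.le k)
  calc (m+1) * (k.choose m * j^m * (k-j)^(k-m))
      = (k.choose m * j^m * (k-j)^(k-(m+1))) * ((m+1) * (k-j)) := by
        rw [h1, pow_succ]; ring
    _ ≤ (k.choose m * j^m * (k-j)^(k-(m+1))) * (j * (k-m)) :=
        Nat.mul_le_mul_left _ key
    _ = (k.choose (m+1) * (m+1)) * j^(m+1) * (k-j)^(k-(m+1)) := by
        rw [Nat.choose_succ_right_eq, pow_succ]; ring
    _ = (m+1) * (k.choose (m+1) * j^(m+1) * (k-j)^(k-(m+1))) := by ring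

lemma binom_step_down (k j m : ℕ) (hm : j ≤ m) (hmk : m < k) :
    k.choose (m+1) * j^(m+1) * (k-j)^(k-(m+1)) ≤ k.choose m * j^m * (k-j)^(k-m) := by
  apply Nat.le_of_mul_le_mul_left _ (Nat.succ_pos m)
  have h1 : k - m = (k - (m+1)) + 1 := by omega
  have key : j * (k - m) ≤ (m+1) * (k - j) :=
    Nat.mul_le_mul (by omega) (Nat.sub_le_sub_left hm k)
  calc (m+1) * (k.choose (m+1) * j^(m+1) * (k-j)^(k-(m+1)))
      = (k.choose (m+1) * (m+1)) * j^(m+1) * (k-j)^(k-(m+1)) := by ring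
    _ = (k.choose m * j^m * (k-j)^(k-(m+1))) * (j * (k-m)) := by
        rw [Nat.choose_succ_right_eq, pow_succ]; ring
    _ ≤ (k.choose m * j^m * (k-j)^(k-(m+1))) * ((m+1) * (k-j)) :=
        Nat.mul_le_mul_left _ key
    _ = (m+1) * (k.choose m * j^m * (k-j)^(k-m)) := by
        rw [h1, pow_succ]; ring

lemma binom_up_to_peak (k j : ℕ) (hjk : j ≤ k) :
    ∀ t m, m + t = j → k.choose m * j^m * (k-j)^(k-m) ≤ k.choose j * j^j * (k-j)^(k-j)
  | 0, m, h => by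
      have : m = j := by omega
      subst this; exact le_refl _
  | (t+1), m, h =>
      le_trans (binom_step_up k j m (by omega) hjk)
        (binom_up_to_peak k j hjk t (m+1) (by omega))

lemma binom_down_from_peak (k j : ℕ) (hjk : j ≤ k) :
    ∀ t, j + t ≤ k → k.choose (j+t) * j^(j+t) * (k-j)^(k-(j+t)) ≤ k.choose j * j^j * (k-j)^(k-j)
  | 0, _ => le_refl _
  | (t+1), h =>
      le_trans
        (by
          have h2 := binom_step_down k j (j+t) (by omega) (by omega)
          exact h2)
        (binom_down_from_peak k j hjk t (by omega))

lemma binom_le_peak (k j m : ℕ) (hjk : j ≤ k) (hmk : m ≤ k) :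
    k.choose m * j^m * (k-j)^(k-m) ≤ k.choose j * j^j * (k-j)^(k-j) := by
  rcases le_or_gt m j with h | h
  · exact binom_up_to_peak k j hjk (j - m) m (by omega)
  · have := binom_down_from_peak k j hjk (m - j) (by omega)
    simpa [show j + (m - j) = m by omega] using this

lemma binom_sum (k j : ℕ) (hjk : j ≤ k) :
    ∑ m ∈ Finset.range (k+1), k.choose m * j^m * (k-j)^(k-m) = k^k := by
  have h := add_pow j (k-j) k
  rw [Nat.add_sub_cancel' hjk] at h
  rw [h]
  exact Finset.sum_congr rfl (fun m _ => by push_cast; ring)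

lemma peak_ge (k j : ℕ) (hjk : j ≤ k) :
    k^k ≤ (k+1) * (k.choose j * j^j * (k-j)^(k-j)) := by
  rw [← binom_sum k j hjk]
  calc ∑ m ∈ Finset.range (k+1), k.choose m * j^m * (k-j)^(k-m)
      ≤ (Finset.range (k+1)).card • (k.choose j * j^j * (k-j)^(k-j)) :=
        Finset.sum_le_card_nsmul _ _ _
          (fun m hm => binom_le_peak k j m hjk (by
            simpa using Finset.mem_range_succ_iff.mp hm))
    _ = (k+1) * (k.choose j * j^j * (k-j)^(k-j)) := by
        simp [Finset.card_range, smul_eq_mul]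

lemma peak_le (k j : ℕ) (hjk : j ≤ k) :
    k.choose j * j^j * (k-j)^(k-j) ≤ k^k := by
  rw [← binom_sum k j hjk]
  exact Finset.single_le_sum (f := fun m => k.choose m * j^m * (k-j)^(k-m))
    (fun m _ => Nat.zero_le _) (Finset.mem_range_succ_iff.mpr hjk)

/-- For every `α > 1` and every `n ≥ 2`, `(n·α/(1-α))·log n ≤ Ψ(α,n) < 0`. -/
theorem Psi_bounds (α : ℝ) (hα : 1 < α) (n : ℕ) (hn : 2 ≤ n) :
    ((n : ℝ) * α / (1 - α)) * Real.log (n : ℝ) ≤ Psi α n ∧ Psi α n < 0 := by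
  have hn1 : 1 ≤ n - 1 := by omega
  have hc0 : (0:ℝ) < ((n-1:ℕ):ℝ) := by exact_mod_cast Nat.lt_of_lt_of_le Nat.zero_lt_one hn1
  have hcne : ((n:ℝ) - 1) ≠ 0 := by
    have : (1:ℝ) < n := by exact_mod_cast lt_of_lt_of_le one_lt_two hn
    linarith
  have hceq : ((n:ℝ) - 1) = ((n-1:ℕ):ℝ) := by
    rw [Nat.cast_sub (by omega : 1 ≤ n), Nat.cast_one]
  -- the inner value for each i
  set f : ℕ → ℝ := fun i =>
    (n : ℝ) * ((n - 1).choose (i - 1) : ℝ)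
      * (((i : ℝ) - 1) / ((n : ℝ) - 1)) ^ (i - 1)
      * (((n : ℝ) - (i : ℝ)) / ((n : ℝ) - 1)) ^ (n - i) with hf
  have hval : ∀ i ∈ Finset.Icc 1 n,
      f i = ((n * ((n-1).choose (i-1)) * (i-1)^(i-1) * (n-i)^(n-i) : ℕ) : ℝ)
        / (((n-1)^(n-1) : ℕ) : ℝ) := by
    intro i hi
    rw [Finset.mem_Icc] at hi
    obtain ⟨hi1, hin⟩ := hi
    have h1 : ((i:ℝ) - 1) = ((i-1:ℕ):ℝ) := by
      rw [Nat.cast_sub hi1, Nat.cast_one]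
    have h2 : ((n:ℝ) - (i:ℝ)) = ((n-i:ℕ):ℝ) := by
      rw [Nat.cast_sub hin]
    have hsum : (i - 1) + (n - i) = n - 1 := by omega
    rw [hf]
    simp only
    rw [h1, h2, hceq, div_pow, div_pow]
    rw [eq_div_iff (ne_of_gt (by positivity : (0:ℝ) < (((n-1)^(n-1) : ℕ):ℝ)))]
    have hpow : (((n-1)^(n-1) : ℕ):ℝ) = ((n-1:ℕ):ℝ)^(i-1) * ((n-1:ℕ):ℝ)^(n-i) := by
      rw [← pow_add, hsum, Nat.cast_pow]
    have hd1 : ((n-1:ℕ):ℝ)^(i-1) ≠ 0 := by positivity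
    have hd2 : ((n-1:ℕ):ℝ)^(n-i) ≠ 0 := by positivity
    rw [hpow, Nat.cast_mul, Nat.cast_mul, Nat.cast_mul, Nat.cast_pow, Nat.cast_pow]
    field_simp
  have hpos : ∀ i ∈ Finset.Icc 1 n, (1:ℝ) ≤ f i := by
    intro i hi
    have hmem := hi
    rw [Finset.mem_Icc] at hi
    rw [hval i hmem]
    rw [le_div_iff₀ (by positivity)]
    rw [one_mul]
    have hjk : i - 1 ≤ n - 1 := by omega
    have := peak_ge (n-1) (i-1) hjk
    have hkj : (n-1) - (i-1) = n - i := by omega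
    rw [hkj] at this
    have hk1 : n - 1 + 1 = n := by omega
    rw [hk1] at this
    exact_mod_cast le_trans this (le_of_eq (by ring))
  have hle : ∀ i ∈ Finset.Icc 1 n, f i ≤ (n:ℝ) := by
    intro i hi
    have hmem := hi
    rw [Finset.mem_Icc] at hi
    rw [hval i hmem]
    rw [div_le_iff₀ (by positivity)]
    have hjk : i - 1 ≤ n - 1 := by omega
    have := peak_le (n-1) (i-1) hjk
    have hkj : (n-1) - (i-1) = n - i := by omega
    rw [hkj] at this
    calc ((n * ((n-1).choose (i-1)) * (i-1)^(i-1) * (n-i)^(n-i) : ℕ) : ℝ)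
        = (n:ℝ) * (((n-1).choose (i-1) * (i-1)^(i-1) * (n-i)^(n-i) : ℕ) : ℝ) := by
          push_cast; ring
      _ ≤ (n:ℝ) * (((n-1)^(n-1) : ℕ):ℝ) := by
          apply mul_le_mul_of_nonneg_left _ (by positivity)
          exact_mod_cast this
  -- bounds on the log sum
  set S : ℝ := ∑ i ∈ Finset.Icc 1 n, Real.log (f i) with hS
  have hlog_nonneg : ∀ i ∈ Finset.Icc 1 n, 0 ≤ Real.log (f i) :=
    fun i hi => Real.log_nonneg (hpos i hi)
  have hf1 : f 1 = (n:ℝ) := by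
    rw [hf]
    simp only
    norm_num [div_self hcne]
  have hSpos : 0 < S := by
    have h1mem : 1 ∈ Finset.Icc 1 n := Finset.mem_Icc.mpr ⟨le_refl _, by omega⟩
    have := Finset.single_le_sum hlog_nonneg h1mem
    have hlogn : 0 < Real.log (f 1) := by
      rw [hf1]
      apply Real.log_pos
      exact_mod_cast lt_of_lt_of_le one_lt_two hn
    exact lt_of_lt_of_le hlogn this
  have hSle : S ≤ (n:ℝ) * Real.log (n:ℝ) := by
    calc S ≤ (Finset.Icc 1 n).card • Real.log (n:ℝ) := by
          apply Finset.sum_le_card_nsmul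
          intro i hi
          exact Real.log_le_log (lt_of_lt_of_le one_pos (hpos i hi)) (hle i hi)
      _ = (n:ℝ) * Real.log (n:ℝ) := by
          rw [Nat.card_Icc]
          simp [nsmul_eq_mul]
  have hcoef : α / (1 - α) < 0 :=
    div_neg_of_pos_of_neg (lt_trans one_pos hα) (by linarith)
  have hPsi : Psi α n = (α / (1 - α)) * S := rfl
  constructor
  · rw [hPsi]
    have : ((n : ℝ) * α / (1 - α)) * Real.log (n : ℝ)
        = (α / (1 - α)) * ((n:ℝ) * Real.log (n:ℝ)) := by ring
    rw [this]
    exact mul_le_mul_of_nonpos_left hSle hcoef.le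
  · rw [hPsi]
    exact mul_neg_of_neg_of_pos hcoef hSpos
end

section
/- Let n ≥ 1 and let f be a probability density on ℝ with continuous cdf F, such that each integral K(f, f_(i)) = ∫ f(x)·log(f(x)/f_(i)(x)) dx exists. Then the Kullback–Leibler information between the distribution of an SRS and of a perfect RSS of size n is distribution-free and equals K(X_SRS, X_RSS) = Σ_{i=1}^n K(f, f_(i)) = n·(n-1) − Σ_{i=1}^n log(i·C(n,i)). -/
open MeasureTheory Real

/-- Kullback–Leibler divergence between densities `g` and `h`. -/
noncomputable def KL (g h : ℝ → ℝ) : ℝ := ∫ x, g x * Real.log (g x / h x)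

/-!
Let `μ` be the law with density `f` and `F` its cdf. Since `F` is continuous, it pushes `μ` forward
to the uniform distribution on `(0, 1)` (probability integral transform). Hence `0 < F < 1`
`μ`-a.e., where `log (f / f₍ᵢ₎) = -log (i C(n,i)) - (i - 1) log F - (n - i) log (1 - F)`, and
integrating against `μ` turns `log F` and `log (1 - F)` into `∫₀¹ log u du = -1`. So
`K(f, f₍ᵢ₎) = n - 1 - log (i C(n,i))` for every `i`, whatever `f` is.
-/

open Set Filter ProbabilityTheory

theorem Monotone.preimage_Iic_eq_Iic_of_continuous {α β : Type*}
    [ConditionallyCompleteLinearOrder α] [TopologicalSpace α] [OrderTopology α]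
    [PartialOrder β] [TopologicalSpace β] [ClosedIicTopology β] {F : α → β}
    (hmono : Monotone F) (hF : Continuous F) {x : α} {t : β} (hx : F x = t)
    (hbdd : BddAbove (F ⁻¹' Iic t)) : ∃ a, F a = t ∧ F ⁻¹' Iic t = Iic a := by
  subst hx
  have hmem : sSup (F ⁻¹' Iic (F x)) ∈ F ⁻¹' Iic (F x) :=
    (isClosed_Iic.preimage hF).csSup_mem ⟨x, le_rfl⟩ hbdd
  refine ⟨sSup (F ⁻¹' Iic (F x)), le_antisymm hmem (hmono (le_csSup hbdd le_rfl)), ?_⟩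
  exact Subset.antisymm (fun y hy => le_csSup hbdd hy) fun y hy => (hmono hy).trans hmem

namespace ProbabilityTheory

variable {μ : Measure ℝ} [IsProbabilityMeasure μ]

theorem map_cdf_eq_restrict_Ioo (hF : Continuous (cdf μ)) :
    μ.map (cdf μ) = volume.restrict (Ioo 0 1) := by
  have : IsProbabilityMeasure (μ.map (cdf μ)) := Measure.isProbabilityMeasure_map hF.aemeasurable
  have : IsProbabilityMeasure (volume.restrict (Ioo (0 : ℝ) 1)) := ⟨by simp⟩
  refine Measure.ext_of_Iic _ _ fun t => ?_
  rw [Measure.map_apply hF.measurable measurableSet_Iic, Measure.restrict_apply measurableSet_Iic]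
  rcases lt_or_ge t 0 with ht0 | ht0
  · have hpre : cdf μ ⁻¹' Iic t = ∅ :=
      eq_empty_of_forall_notMem fun x hx => (ht0.trans_le (cdf_nonneg μ x)).not_ge hx
    have hinter : Iic t ∩ Ioo 0 1 = ∅ :=
      eq_empty_of_forall_notMem fun x hx => by linarith [mem_Iic.mp hx.1, hx.2.1]
    rw [hpre, hinter, measure_empty, measure_empty]
  rcases le_or_gt 1 t with ht1 | ht1
  · have hpre : cdf μ ⁻¹' Iic t = univ :=
      eq_univ_of_forall fun x => (cdf_le_one μ x).trans ht1
    rw [hpre, inter_eq_right.mpr (fun x hx => hx.2.le.trans ht1)]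
    simp
  obtain ⟨z, hz⟩ :=
    ((tendsto_cdf_atTop μ).eventually (eventually_gt_nhds ht1)).exists_forall_of_atTop
  have hbdd : BddAbove (cdf μ ⁻¹' Iic t) :=
    ⟨z, fun y hy => le_of_not_gt fun hzy => (hz y hzy.le).not_ge hy⟩
  have hinter : Iic t ∩ Ioo 0 1 = Ioc 0 t := by
    ext u
    simp only [mem_inter_iff, mem_Iic, mem_Ioo, mem_Ioc]
    exact ⟨fun h => ⟨h.2.1, h.1⟩, fun h => ⟨h.2, h.1, h.2.trans_lt ht1⟩⟩
  rw [hinter, volume_Ioc, sub_zero]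
  rcases (cdf μ ⁻¹' Iic t).eq_empty_or_nonempty with hempty | ⟨x, hx⟩
  · obtain rfl : t = 0 := by
      refine ht0.eq_or_lt.elim Eq.symm fun htpos => ?_
      obtain ⟨x, hx⟩ := ((tendsto_cdf_atBot μ).eventually (eventually_lt_nhds htpos)).exists
      exact ((eq_empty_iff_forall_notMem.mp hempty x) hx.le).elim
    simp [hempty]
  · obtain ⟨y, hy⟩ := intermediate_value_univ x z hF ⟨hx, (hz z le_rfl).le⟩
    obtain ⟨a, hFa, hpre⟩ := (monotone_cdf μ).preimage_Iic_eq_Iic_of_continuous hF hy hbdd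
    rw [hpre, ← ofReal_cdf, hFa]

variable (hF : Continuous (cdf μ))
include hF

theorem integral_comp_cdf {g : ℝ → ℝ} (hg : AEStronglyMeasurable g (volume.restrict (Ioo 0 1))) :
    ∫ x, g (cdf μ x) ∂μ = ∫ u in Ioo 0 1, g u := by
  rw [← map_cdf_eq_restrict_Ioo hF] at hg ⊢
  exact (integral_map hF.aemeasurable hg).symm

theorem integrable_comp_cdf {g : ℝ → ℝ} (hg : IntegrableOn g (Ioo 0 1)) :
    Integrable (fun x => g (cdf μ x)) μ := by
  rw [IntegrableOn, ← map_cdf_eq_restrict_Ioo hF] at hg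
  exact hg.comp_aemeasurable hF.aemeasurable

theorem ae_cdf_mem_Ioo : ∀ᵐ x ∂μ, cdf μ x ∈ Ioo 0 1 := by
  have h : ∀ᵐ u ∂(μ.map (cdf μ)), u ∈ Ioo (0 : ℝ) 1 := by
    rw [map_cdf_eq_restrict_Ioo hF]
    exact ae_restrict_mem measurableSet_Ioo
  exact ae_of_ae_map hF.aemeasurable h

theorem integral_log_cdf : ∫ x, log (cdf μ x) ∂μ = -1 := by
  rw [integral_comp_cdf hF measurable_log.aestronglyMeasurable, ← integral_Ioc_eq_integral_Ioo,
    ← intervalIntegral.integral_of_le zero_le_one, integral_log_from_zero]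
  simp

theorem integral_log_one_sub_cdf : ∫ x, log (1 - cdf μ x) ∂μ = -1 := by
  rw [integral_comp_cdf hF (g := fun u => log (1 - u))
    (measurable_log.comp (measurable_const.sub measurable_id)).aestronglyMeasurable,
    ← integral_Ioc_eq_integral_Ioo, ← intervalIntegral.integral_of_le zero_le_one,
    intervalIntegral.integral_comp_sub_left (fun u => log u), sub_self, sub_zero,
    integral_log_from_zero]
  simp

theorem integrable_log_cdf : Integrable (fun x => log (cdf μ x)) μ :=
  integrable_comp_cdf hF <|
    (intervalIntegral.intervalIntegrable_log' (a := 0) (b := 1)).1.mono_set Ioo_subset_Ioc_self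

theorem integrable_log_one_sub_cdf : Integrable (fun x => log (1 - cdf μ x)) μ := by
  refine integrable_comp_cdf hF (g := fun u => log (1 - u)) ?_
  have h := (intervalIntegral.intervalIntegrable_log' (a := 0) (b := 1)).comp_sub_left 1
  rw [sub_zero, sub_self] at h
  exact h.symm.1.mono_set Ioo_subset_Ioc_self

end ProbabilityTheory

section WithDensity

variable {α : Type*} [MeasurableSpace α] {μ : Measure α} {f : α → ℝ}

theorem integral_withDensity_ofReal (hf : AEMeasurable f μ) (hf_nonneg : 0 ≤ᵐ[μ] f)
    (g : α → ℝ) :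
    ∫ x, g x ∂μ.withDensity (fun x => ENNReal.ofReal (f x)) = ∫ x, f x * g x ∂μ := by
  rw [integral_withDensity_eq_integral_toReal_smul₀ hf.ennreal_ofReal
    (ae_of_all _ fun _ => ENNReal.ofReal_lt_top)]
  refine integral_congr_ae ?_
  filter_upwards [hf_nonneg] with x hx
  rw [ENNReal.toReal_ofReal hx, smul_eq_mul]

theorem isProbabilityMeasure_withDensity_ofReal (hf_nonneg : 0 ≤ᵐ[μ] f)
    (hf_int : ∫ x, f x ∂μ = 1) :
    IsProbabilityMeasure (μ.withDensity fun x => ENNReal.ofReal (f x)) := by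
  have hfi : Integrable f μ := .of_integral_ne_zero (by simp [hf_int])
  constructor
  rw [withDensity_apply _ MeasurableSet.univ, Measure.restrict_univ,
    ← ofReal_integral_eq_lintegral_ofReal hfi hf_nonneg, hf_int, ENNReal.ofReal_one]

end WithDensity

theorem cdf_withDensity_ofReal {f : ℝ → ℝ} (hf_nonneg : 0 ≤ᵐ[volume] f) (hf_int : ∫ x, f x = 1) :
    ⇑(cdf (volume.withDensity fun x => ENNReal.ofReal (f x))) = cdfOf f := by
  have := isProbabilityMeasure_withDensity_ofReal hf_nonneg hf_int
  have hfi : Integrable f := .of_integral_ne_zero (by simp [hf_int])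
  funext x
  rw [cdf_eq_real, measureReal_def, withDensity_apply _ measurableSet_Iic,
    ← ofReal_integral_eq_lintegral_ofReal hfi.integrableOn (ae_restrict_of_ae hf_nonneg),
    ENNReal.toReal_ofReal (integral_nonneg_of_ae (ae_restrict_of_ae hf_nonneg)), cdfOf]

theorem log_div_osDen {f : ℝ → ℝ} {n i : ℕ} {x : ℝ} (hi : 1 ≤ i) (hin : i ≤ n) (hfx : 0 < f x)
    (hFx : cdfOf f x ∈ Ioo 0 1) :
    log (f x / osDen f n i x) = -log (i * n.choose i) - (i - 1) * log (cdfOf f x)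
      - (n - i) * log (1 - cdfOf f x) := by
  have hc : (0 : ℝ) < i * n.choose i := by
    have := Nat.choose_pos hin
    positivity
  have hF : 0 < cdfOf f x := hFx.1
  have hF' : 0 < 1 - cdfOf f x := sub_pos.mpr hFx.2
  rw [osDen, log_div hfx.ne' (by positivity), log_mul (by positivity) hfx.ne',
    log_mul (by positivity) (by positivity), log_mul hc.ne' (by positivity), log_pow, log_pow,
    Nat.cast_sub hi, Nat.cast_sub hin, Nat.cast_one]
  ring

theorem KL_osDen {f : ℝ → ℝ} (hf_nonneg : 0 ≤ᵐ[volume] f) (hf_int : ∫ x, f x = 1)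
    (hF_cont : Continuous (cdfOf f)) {n i : ℕ} (hi : 1 ≤ i) (hin : i ≤ n) :
    KL f (osDen f n i) = (n - 1) - log (i * n.choose i) := by
  set μ := volume.withDensity fun x => ENNReal.ofReal (f x)
  have := isProbabilityMeasure_withDensity_ofReal hf_nonneg hf_int
  have hf_meas : AEMeasurable f :=
    (Integrable.of_integral_ne_zero (by simp [hf_int])).aemeasurable
  have hcdf : ⇑(cdf μ) = cdfOf f := cdf_withDensity_ofReal hf_nonneg hf_int
  rw [← hcdf] at hF_cont
  have hF_mem : ∀ᵐ x, 0 < f x → cdfOf f x ∈ Ioo 0 1 := by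
    have := (ae_withDensity_iff' hf_meas.ennreal_ofReal).mp (ae_cdf_mem_Ioo (μ := μ) hF_cont)
    simpa only [hcdf, ne_eq, ENNReal.ofReal_eq_zero, not_le] using this
  have hae : (fun x => f x * log (f x / osDen f n i x)) =ᵐ[volume] fun x => f x *
      (-log (i * n.choose i) - (i - 1) * log (cdf μ x) - (n - i) * log (1 - cdf μ x)) := by
    filter_upwards [hF_mem, hf_nonneg] with x hx hfx
    rcases hfx.eq_or_lt with h0 | hpos
    · simp [← h0]
    · rw [log_div_osDen hi hin hpos (hx hpos), hcdf]
  have hlog := (integrable_log_cdf (μ := μ) hF_cont).const_mul ((i : ℝ) - 1)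
  have hlog1 := (integrable_log_one_sub_cdf (μ := μ) hF_cont).const_mul ((n : ℝ) - i)
  have hsub : Integrable (fun x => -log (i * n.choose i) - (i - 1) * log (cdf μ x)) μ :=
    (integrable_const _).sub hlog
  rw [KL, integral_congr_ae hae, ← integral_withDensity_ofReal hf_meas hf_nonneg,
    integral_sub hsub hlog1, integral_sub (integrable_const _) hlog,
    integral_const, integral_const_mul, integral_const_mul, integral_log_cdf hF_cont,
    integral_log_one_sub_cdf hF_cont, probReal_univ, one_smul]
  ring

theorem KL_SRS_RSS_distribution_free_general (n : ℕ) (f : ℝ → ℝ)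
    (hf_nonneg : ∀ x, 0 ≤ f x)
    (hf_int : ∫ x, f x = 1)
    (hF_cont : Continuous (cdfOf f)) :
    (∑ i ∈ Finset.Icc 1 n, KL f (osDen f n i))
      = (n : ℝ) * ((n : ℝ) - 1)
        - ∑ i ∈ Finset.Icc 1 n, Real.log ((i : ℝ) * (n.choose i : ℝ)) := by
  rw [Finset.sum_congr rfl fun i hi => KL_osDen (ae_of_all _ hf_nonneg) hf_int hF_cont
    (Finset.mem_Icc.mp hi).1 (Finset.mem_Icc.mp hi).2, Finset.sum_sub_distrib, Finset.sum_const,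
    Nat.card_Icc, Nat.add_sub_cancel, nsmul_eq_mul]

/-- The Kullback–Leibler information between the distribution of an SRS and of a perfect RSS
of size `n` is distribution-free:
`Σ_{i=1}^n K(f, f_(i)) = n·(n-1) − Σ_{i=1}^n log(i·C(n,i))`. -/
theorem KL_SRS_RSS_distribution_free (n : ℕ) (hn : 1 ≤ n) (f : ℝ → ℝ)
    (hf_meas : Measurable f) (hf_nonneg : ∀ x, 0 ≤ f x)
    (hf_int : ∫ x, f x = 1)
    (hF_cont : Continuous (cdfOf f))
    (hint : ∀ i ∈ Finset.Icc 1 n,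
      Integrable (fun x => f x * Real.log (f x / osDen f n i x))) :
    (∑ i ∈ Finset.Icc 1 n, KL f (osDen f n i))
      = (n : ℝ) * ((n : ℝ) - 1)
        - ∑ i ∈ Finset.Icc 1 n, Real.log ((i : ℝ) * (n.choose i : ℝ)) :=
  KL_SRS_RSS_distribution_free_general n f hf_nonneg hf_int hF_cont
end

section
/- Define d_n = n·(n-1) − Σ_{i=1}^n log(i·C(n,i)) for integers n ≥ 1. Then d_1 = 0, d_n ≥ 0 for every n ≥ 1, and the sequence (d_n) is nondecreasing: d_n ≤ d_{n+1} for every n ≥ 1. -/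
open Real

private lemma sum_log_fact (n : ℕ) :
    ∑ j ∈ Finset.range n, Real.log ((j : ℝ) + 1) = Real.log (n.factorial : ℝ) := by
  induction n with
  | zero => simp
  | succ n ih =>
    rw [Finset.sum_range_succ, ih, Nat.factorial_succ]
    push_cast
    rw [Real.log_mul (by positivity) (by exact_mod_cast n.factorial_ne_zero)]
    ring

private lemma range_succ_eq_insert (n : ℕ) :
    Finset.range (n + 1) = insert 0 (Finset.Icc 1 n) := by
  ext x; simp [Finset.mem_range, Finset.mem_Icc]; omega

/-- the key recurrence -/
private lemma dSeq_succ_eq (n : ℕ) :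
    ((n : ℝ) + 1) * ((n : ℝ) + 1 - 1)
        - ∑ i ∈ Finset.Icc 1 (n + 1), Real.log ((i : ℝ) * ((n+1).choose i : ℝ))
      = (n : ℝ) * ((n : ℝ) - 1)
          - ∑ i ∈ Finset.Icc 1 n, Real.log ((i : ℝ) * (n.choose i : ℝ))
        + (2 * n - ((n : ℝ) + 1) * Real.log ((n : ℝ) + 1) + Real.log (n.factorial : ℝ)) := by
  have hC : ∀ j ∈ Finset.range (n + 1), (0:ℝ) < (n.choose j : ℝ) := by
    intro j hj
    exact_mod_cast Nat.choose_pos (by simpa [Nat.lt_succ_iff] using hj)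
  -- T(n+1)
  have h1 : ∑ i ∈ Finset.Icc 1 (n + 1), Real.log ((i : ℝ) * ((n+1).choose i : ℝ))
      = ((n : ℝ) + 1) * Real.log ((n : ℝ) + 1)
        + ∑ j ∈ Finset.range (n + 1), Real.log ((n.choose j : ℝ)) := by
    rw [show Finset.Icc 1 (n+1) = Finset.Ico 1 (n+2) from (Finset.Ico_add_one_right_eq_Icc 1 (n+1)).symm,
      Finset.sum_Ico_eq_sum_range]
    have hn2 : n + 2 - 1 = n + 1 := rfl
    rw [hn2]
    have hterm : ∀ j ∈ Finset.range (n+1),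
        Real.log ((((1+j : ℕ)) : ℝ) * ((n+1).choose (1+j) : ℝ))
          = Real.log ((n:ℝ)+1) + Real.log ((n.choose j : ℝ)) := by
      intro j hj
      have hkey : (1 + j) * (n+1).choose (1 + j) = (n + 1) * n.choose j := by
        rw [add_comm 1 j, mul_comm (j+1)]
        exact (Nat.add_one_mul_choose_eq n j).symm
      have : ((1 + j : ℕ) : ℝ) * ((n+1).choose (1 + j) : ℝ)
          = ((n : ℝ) + 1) * (n.choose j : ℝ) := by exact_mod_cast hkey
      rw [this, Real.log_mul (by positivity) (ne_of_gt (hC j hj))]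
    rw [Finset.sum_congr rfl hterm, Finset.sum_add_distrib, Finset.sum_const,
      Finset.card_range, nsmul_eq_mul]
    push_cast
    ring
  -- T(n)
  have h2 : ∑ i ∈ Finset.Icc 1 n, Real.log ((i : ℝ) * (n.choose i : ℝ))
      = Real.log (n.factorial : ℝ)
        + ∑ j ∈ Finset.range (n + 1), Real.log ((n.choose j : ℝ)) := by
    have hsplit : ∑ i ∈ Finset.Icc 1 n, Real.log ((i : ℝ) * (n.choose i : ℝ))
        = (∑ i ∈ Finset.Icc 1 n, Real.log (i : ℝ))
          + ∑ i ∈ Finset.Icc 1 n, Real.log ((n.choose i : ℝ)) := by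
      rw [← Finset.sum_add_distrib]
      apply Finset.sum_congr rfl
      intro i hi
      rw [Finset.mem_Icc] at hi
      have h1 : (0:ℝ) < (i:ℝ) := by exact_mod_cast hi.1
      have h2 : (0:ℝ) < (n.choose i : ℝ) := by exact_mod_cast Nat.choose_pos hi.2
      rw [Real.log_mul (ne_of_gt h1) (ne_of_gt h2)]
    have hlogfact : ∑ i ∈ Finset.Icc 1 n, Real.log (i : ℝ) = Real.log (n.factorial : ℝ) := by
      rw [show Finset.Icc 1 n = Finset.Ico 1 (n+1) from (Finset.Ico_add_one_right_eq_Icc 1 n).symm,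
        Finset.sum_Ico_eq_sum_range]
      simp only [Nat.add_sub_cancel]
      rw [← sum_log_fact n]
      apply Finset.sum_congr rfl
      intro j _
      push_cast
      ring_nf
    have hU : ∑ j ∈ Finset.range (n + 1), Real.log ((n.choose j : ℝ))
        = ∑ i ∈ Finset.Icc 1 n, Real.log ((n.choose i : ℝ)) := by
      rw [range_succ_eq_insert, Finset.sum_insert (by simp)]
      simp
    rw [hsplit, hlogfact, hU]
  rw [h1, h2]
  push_cast
  ring

private lemma key_ineq (n : ℕ) :
    ((n : ℝ) + 1) * Real.log ((n : ℝ) + 1) ≤ 2 * n + Real.log (n.factorial : ℝ) := by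
  induction n with
  | zero => simp
  | succ n ih =>
    have hfact : Real.log ((n+1).factorial : ℝ) = Real.log ((n : ℝ) + 1) + Real.log (n.factorial : ℝ) := by
      rw [Nat.factorial_succ]
      push_cast
      rw [Real.log_mul (by positivity) (by exact_mod_cast n.factorial_ne_zero)]
    have hpos1 : (0:ℝ) < (n : ℝ) + 1 := by positivity
    have hpos2 : (0:ℝ) < (n : ℝ) + 2 := by positivity
    have hlog : Real.log ((n : ℝ) + 2) - Real.log ((n : ℝ) + 1) ≤ 1 / ((n : ℝ) + 1) := by
      rw [← Real.log_div (ne_of_gt hpos2) (ne_of_gt hpos1)]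
      have := Real.log_le_sub_one_of_pos (show (0:ℝ) < ((n:ℝ)+2)/((n:ℝ)+1) by positivity)
      calc Real.log (((n:ℝ)+2)/((n:ℝ)+1)) ≤ ((n:ℝ)+2)/((n:ℝ)+1) - 1 := this
        _ = 1 / ((n:ℝ)+1) := by field_simp; ring
    have hmul : ((n : ℝ) + 2) * (Real.log ((n : ℝ) + 2) - Real.log ((n : ℝ) + 1)) ≤ 2 := by
      calc ((n : ℝ) + 2) * (Real.log ((n : ℝ) + 2) - Real.log ((n : ℝ) + 1))
          ≤ ((n : ℝ) + 2) * (1 / ((n : ℝ) + 1)) := by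
            apply mul_le_mul_of_nonneg_left hlog (by positivity)
        _ ≤ 2 := by rw [mul_one_div, div_le_iff₀ hpos1]; nlinarith [hpos1]
    have hexp : ((n:ℝ)+2) * Real.log ((n:ℝ)+1)
        = Real.log ((n:ℝ)+1) + ((n:ℝ)+1) * Real.log ((n:ℝ)+1) := by ring
    rw [hfact]
    push_cast
    have h12 : ((n:ℝ) + 1 + 1) = ((n:ℝ) + 2) := by ring
    rw [h12]
    nlinarith [hmul, ih, hexp]


/-- `d_n = n·(n-1) − Σ_{i=1}^n log(i·C(n,i))`, the distribution-free Kullback–Leibler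
information between an SRS and a perfect RSS of size `n`. -/
noncomputable def dSeq (n : ℕ) : ℝ :=
  (n : ℝ) * ((n : ℝ) - 1) - ∑ i ∈ Finset.Icc 1 n, Real.log ((i : ℝ) * (n.choose i : ℝ))

private lemma dSeq_succ (n : ℕ) :
    dSeq (n + 1) = dSeq n
      + (2 * n - ((n : ℝ) + 1) * Real.log ((n : ℝ) + 1) + Real.log (n.factorial : ℝ)) := by
  have := dSeq_succ_eq n
  unfold dSeq
  push_cast
  push_cast at this
  linarith [this]

private lemma dSeq_mono (n : ℕ) : dSeq n ≤ dSeq (n + 1) := by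
  rw [dSeq_succ]
  have := key_ineq n
  linarith

/-- `d_1 = 0`, `d_n ≥ 0` for every `n ≥ 1`, and the sequence `(d_n)` is nondecreasing. -/
theorem dSeq_nonneg_and_monotone :
    dSeq 1 = 0 ∧ (∀ n : ℕ, 1 ≤ n → 0 ≤ dSeq n) ∧
      (∀ n : ℕ, 1 ≤ n → dSeq n ≤ dSeq (n + 1)) := by
  have h1 : dSeq 1 = 0 := by
    simp [dSeq]
  refine ⟨h1, ?_, fun n _ => dSeq_mono n⟩
  intro n hn
  induction n with
  | zero => omega
  | succ m ih =>
    rcases Nat.eq_zero_or_pos m with h | h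
    · subst h; exact le_of_eq h1.symm
    · exact le_trans (ih h) (dSeq_mono m)
end

section
/- Let n ≥ 1 and suppose f is a continuous probability density on ℝ that is strictly positive on its support, with all integrals below existing. Then the reverse Kullback–Leibler information between a perfect RSS and an SRS of size n is distribution-free: Σ_{i=1}^n K(f_(i), f) = Σ_{i=1}^n ∫_0^1 b_i(u)·log b_i(u) du = −Σ_{i=1}^n H(U_(i)), where b_i(u) = i·C(n,i)·u^{i-1}·(1-u)^{n-i} is the Beta(i, n-i+1) density. -/
open MeasureTheory Real

/-- Beta(i, n-i+1) density: `b_i(u) = i·C(n,i)·u^(i-1)·(1-u)^(n-i)`. -/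
noncomputable def betaDen (n i : ℕ) (u : ℝ) : ℝ :=
  (i : ℝ) * (n.choose i : ℝ) * u ^ (i - 1) * (1 - u) ^ (n - i)

/-!
`f_(i)(x) = b_i(F x) · f x`, so `K(f_(i), f) = ∫ f x · (b_i log b_i)(F x) dx` over the support
of `f`; since `F' = f` and `F` maps the support injectively onto `(0,1)`, the substitution
`u = F x` turns this into `∫_0^1 b_i log b_i`, whatever `f` is.
-/

theorem hasDerivAt_cdfOf {f : ℝ → ℝ} (hf : Integrable f) {x : ℝ} (hfx : ContinuousAt f x) :
    HasDerivAt (cdfOf f) (f x) x := by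
  have h_split : ∀ y, cdfOf f y = cdfOf f 0 + ∫ t in (0:ℝ)..y, f t := fun y => by
    rw [cdfOf, cdfOf, ← intervalIntegral.integral_Iic_sub_Iic hf.integrableOn hf.integrableOn]
    ring
  rw [funext h_split]
  exact (intervalIntegral.integral_hasDerivAt_right hf.intervalIntegrable
    hf.aestronglyMeasurable.stronglyMeasurableAtFilter hfx).const_add _

theorem osDen_eq_betaDen_comp_mul (f : ℝ → ℝ) (n i : ℕ) :
    osDen f n i = fun x => betaDen n i (cdfOf f x) * f x := by
  ext x
  simp only [osDen, betaDen]

theorem KL_comp_mul_eq_integral (g F f : ℝ → ℝ) :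
    KL (fun x => g (F x) * f x) f = ∫ x, f x * (g (F x) * log (g (F x))) := by
  refine integral_congr_ae (Filter.Eventually.of_forall fun x => ?_)
  by_cases hfx : f x = 0
  · simp [hfx]
  · simp only [mul_div_cancel_right₀ _ hfx]
    ring

theorem integral_mul_comp_cdfOf {f : ℝ → ℝ} (hf_cont : Continuous f)
    (hf_nonneg : ∀ x, 0 ≤ f x) (hf_int : Integrable f)
    (hF_inj : Set.InjOn (cdfOf f) (Function.support f)) (G : ℝ → ℝ) :
    ∫ x, f x * G (cdfOf f x) = ∫ u in cdfOf f '' Function.support f, G u := by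
  rw [integral_image_eq_integral_abs_deriv_smul hf_cont.isOpen_support.measurableSet
    (fun x _ => (hasDerivAt_cdfOf hf_int hf_cont.continuousAt).hasDerivWithinAt) hF_inj]
  simp only [abs_of_nonneg (hf_nonneg _), smul_eq_mul]
  exact (setIntegral_eq_integral_of_forall_compl_eq_zero fun x hx => by
    simp [Function.notMem_support.mp hx]).symm

theorem KL_RSS_SRS_distribution_free_general (n : ℕ) (f : ℝ → ℝ)
    (hf_cont : Continuous f) (hf_nonneg : ∀ x, 0 ≤ f x)
    (hf_int : ∫ x, f x = 1)
    (hF_bij : Set.BijOn (cdfOf f) (Function.support f) (Set.Ioo 0 1)) :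
    (∑ i ∈ Finset.Icc 1 n, KL (osDen f n i) f)
      = ∑ i ∈ Finset.Icc 1 n,
          ∫ u in Set.Ioo (0:ℝ) 1, betaDen n i u * Real.log (betaDen n i u) := by
  have hf_integrable : Integrable f := Integrable.of_integral_ne_zero (by simp [hf_int])
  refine Finset.sum_congr rfl fun i _ => ?_
  rw [osDen_eq_betaDen_comp_mul, KL_comp_mul_eq_integral, ← hF_bij.image_eq]
  exact integral_mul_comp_cdfOf hf_cont hf_nonneg hf_integrable hF_bij.injOn
    fun u => betaDen n i u * log (betaDen n i u)

/-- The reverse Kullback–Leibler information between a perfect RSS and an SRS of size `n` is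
distribution-free: `Σ_{i=1}^n K(f_(i), f) = Σ_{i=1}^n ∫_0^1 b_i(u)·log b_i(u) du`
(which equals `−Σ_{i=1}^n H(U_(i))`). -/
theorem KL_RSS_SRS_distribution_free (n : ℕ) (hn : 1 ≤ n) (f : ℝ → ℝ)
    (hf_cont : Continuous f) (hf_nonneg : ∀ x, 0 ≤ f x)
    (hf_int : ∫ x, f x = 1)
    (hf_pos : ∀ x ∈ Function.support f, 0 < f x)
    (hF_mono : StrictMonoOn (cdfOf f) (Function.support f))
    (hF_bij : Set.BijOn (cdfOf f) (Function.support f) (Set.Ioo 0 1))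
    (hint : ∀ i ∈ Finset.Icc 1 n,
      Integrable (fun x => osDen f n i x * Real.log (osDen f n i x / f x)))
    (hbl : ∀ i ∈ Finset.Icc 1 n,
      IntegrableOn (fun u => betaDen n i u * Real.log (betaDen n i u)) (Set.Ioo 0 1)) :
    (∑ i ∈ Finset.Icc 1 n, KL (osDen f n i) f)
      = ∑ i ∈ Finset.Icc 1 n,
          ∫ u in Set.Ioo (0:ℝ) 1, betaDen n i u * Real.log (betaDen n i u) :=
  KL_RSS_SRS_distribution_free_general n f hf_cont hf_nonneg hf_int hF_bij
end

section
/- Let n ≥ 1, let f be a probability density on ℝ with continuous cdf F, and let p be an n×n doubly stochastic matrix with nonnegative entries. Suppose all KL integrals below exist. Then the KL information between an SRS and an imperfect RSS of size n is at most the KL information between an SRS and a perfect RSS of the same size: Σ_{i=1}^n K(f, f_[i]) ≤ Σ_{i=1}^n K(f, f_(i)). -/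
open MeasureTheory Real

lemma ae_cdf_good (f : ℝ → ℝ) (hf_meas : Measurable f) (hf_nonneg : ∀ x, 0 ≤ f x)
    (hf_int : ∫ x, f x = 1) :
    ∀ᵐ x, f x ≠ 0 → 0 < cdfOf f x ∧ cdfOf f x < 1 := by
  have hfi : Integrable f := by
    by_contra h
    rw [integral_undef h] at hf_int; norm_num at hf_int
  have hF_mono : Monotone (cdfOf f) := fun a b hab =>
    setIntegral_mono_set hfi.integrableOn
      (Filter.Eventually.of_forall fun x => hf_nonneg x)
      ((Set.Iic_subset_Iic.2 hab).eventuallyLE)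
  have hF_nonneg : ∀ x, 0 ≤ cdfOf f x := fun x =>
    setIntegral_nonneg measurableSet_Iic fun t _ => hf_nonneg t
  have hF_le_one : ∀ x, cdfOf f x ≤ 1 := fun x => by
    have := setIntegral_le_integral (s := Set.Iic x) hfi
      (Filter.Eventually.of_forall hf_nonneg)
    rwa [hf_int] at this
  have hmeas_ne : MeasurableSet {x | f x ≠ 0} :=
    (hf_meas (measurableSet_singleton 0)).compl
  -- null pieces on the left
  have hzero : ∀ q : ℝ, cdfOf f q = 0 → volume ({x | f x ≠ 0} ∩ Set.Iic q) = 0 := by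
    intro q hq
    have hae : f =ᵐ[volume.restrict (Set.Iic q)] 0 :=
      (setIntegral_eq_zero_iff_of_nonneg_ae
        (Filter.Eventually.of_forall fun x => hf_nonneg x) hfi.integrableOn).1 hq
    have := Filter.eventually_iff.1 hae
    have h0 : (volume.restrict (Set.Iic q)) {x | f x ≠ 0} = 0 := by
      have := ae_iff.1 hae
      simpa using this
    rwa [Measure.restrict_apply' measurableSet_Iic] at h0
  -- null pieces on the right
  have hone : ∀ q : ℝ, cdfOf f q = 1 → volume ({x | f x ≠ 0} ∩ Set.Ioi q) = 0 := by
    intro q hq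
    have hsplit := integral_add_compl (measurableSet_Iic (a := q)) hfi
    rw [Set.compl_Iic, hf_int] at hsplit
    have hIoi : ∫ x in Set.Ioi q, f x = 0 := by
      have : cdfOf f q = ∫ x in Set.Iic q, f x := rfl
      rw [← this] at hsplit; linarith
    have hae : f =ᵐ[volume.restrict (Set.Ioi q)] 0 :=
      (setIntegral_eq_zero_iff_of_nonneg_ae
        (Filter.Eventually.of_forall fun x => hf_nonneg x) hfi.integrableOn).1 hIoi
    have h0 : (volume.restrict (Set.Ioi q)) {x | f x ≠ 0} = 0 := by
      have := ae_iff.1 hae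
      simpa using this
    rwa [Measure.restrict_apply' measurableSet_Ioi] at h0
  have hbad0 : volume {x | f x ≠ 0 ∧ cdfOf f x = 0} = 0 := by
    set S : Set ℝ := {x | f x ≠ 0 ∧ cdfOf f x = 0} with hS
    set U : Set ℝ := ⋃ q : {q : ℚ // cdfOf f (q : ℝ) = 0},
      ({x | f x ≠ 0} ∩ Set.Iic (q : ℝ)) with hU
    have hUnull : volume U = 0 := measure_iUnion_null fun q => hzero _ q.2
    have hsub : S ⊆ U ∪ (S \ U) := fun x hx => by
      by_cases h : x ∈ U
      · exact Or.inl h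
      · exact Or.inr ⟨hx, h⟩
    have hEsub : (S \ U).Subsingleton := by
      intro a ha b hb
      by_contra hne
      have key : ∀ c d : ℝ, c ∈ S \ U → d ∈ S \ U → c < d → False := by
        intro c d hc hd hcd
        obtain ⟨q, hq1, hq2⟩ := exists_rat_btwn hcd
        have hq0 : cdfOf f (q : ℝ) = 0 :=
          le_antisymm (hd.1.2 ▸ hF_mono hq2.le) (hF_nonneg _)
        exact hc.2 (Set.mem_iUnion.2 ⟨⟨q, hq0⟩, hc.1.1, hq1.le⟩)
      rcases lt_trichotomy a b with h | h | h
      · exact key a b ha hb h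
      · exact hne h
      · exact key b a hb ha h
    exact measure_mono_null hsub
      (measure_union_null hUnull (hEsub.measure_zero _))
  have hbad1 : volume {x | f x ≠ 0 ∧ cdfOf f x = 1} = 0 := by
    set S : Set ℝ := {x | f x ≠ 0 ∧ cdfOf f x = 1} with hS
    set U : Set ℝ := ⋃ q : {q : ℚ // cdfOf f (q : ℝ) = 1},
      ({x | f x ≠ 0} ∩ Set.Ioi (q : ℝ)) with hU
    have hUnull : volume U = 0 := measure_iUnion_null fun q => hone _ q.2
    have hsub : S ⊆ U ∪ (S \ U) := fun x hx => by
      by_cases h : x ∈ U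
      · exact Or.inl h
      · exact Or.inr ⟨hx, h⟩
    have hEsub : (S \ U).Subsingleton := by
      intro a ha b hb
      by_contra hne
      have key : ∀ c d : ℝ, c ∈ S \ U → d ∈ S \ U → c < d → False := by
        intro c d hc hd hcd
        obtain ⟨q, hq1, hq2⟩ := exists_rat_btwn hcd
        have hq0 : cdfOf f (q : ℝ) = 1 :=
          le_antisymm (hF_le_one _) (hc.1.2 ▸ hF_mono hq1.le)
        exact hd.2 (Set.mem_iUnion.2 ⟨⟨q, hq0⟩, hd.1.1, hq2⟩)
      rcases lt_trichotomy a b with h | h | h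
      · exact key a b ha hb h
      · exact hne h
      · exact key b a hb ha h
    exact measure_mono_null hsub
      (measure_union_null hUnull (hEsub.measure_zero _))
  have h0 : ∀ᵐ x, ¬(f x ≠ 0 ∧ cdfOf f x = 0) := by
    rw [ae_iff]; simpa using hbad0
  have h1 : ∀ᵐ x, ¬(f x ≠ 0 ∧ cdfOf f x = 1) := by
    rw [ae_iff]; simpa using hbad1
  filter_upwards [h0, h1] with x h0x h1x hfx
  refine ⟨lt_of_le_of_ne (hF_nonneg x) fun h => h0x ⟨hfx, h.symm⟩,
    lt_of_le_of_ne (hF_le_one x) fun h => h1x ⟨hfx, h⟩⟩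

lemma pointwise_sum_le (n : ℕ) (f : ℝ → ℝ) (p : ℕ → ℕ → ℝ)
    (hp_nonneg : ∀ i ∈ Finset.Icc 1 n, ∀ r ∈ Finset.Icc 1 n, 0 ≤ p i r)
    (hp_row : ∀ i ∈ Finset.Icc 1 n, ∑ r ∈ Finset.Icc 1 n, p i r = 1)
    (hp_col : ∀ r ∈ Finset.Icc 1 n, ∑ i ∈ Finset.Icc 1 n, p i r = 1)
    (x : ℝ)
    (hx : f x = 0 ∨ (0 < f x ∧ 0 < cdfOf f x ∧ cdfOf f x < 1)) :
    ∑ i ∈ Finset.Icc 1 n, f x * Real.log (f x / impDen f n p i x)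
      ≤ ∑ i ∈ Finset.Icc 1 n, f x * Real.log (f x / osDen f n i x) := by
  rcases hx with h0 | ⟨hfpos, hF0, hF1⟩
  · simp [h0]
  · have hos : ∀ r ∈ Finset.Icc 1 n, 0 < osDen f n r x := by
      intro r hr
      obtain ⟨hr1, hrn⟩ := Finset.mem_Icc.1 hr
      have h1 : (0:ℝ) < (r : ℝ) := by exact_mod_cast hr1
      have h2 : (0:ℝ) < (n.choose r : ℝ) := by exact_mod_cast Nat.choose_pos hrn
      have h3 : (0:ℝ) < (1 - cdfOf f x) := by linarith
      unfold osDen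
      positivity
    have himp : ∀ i ∈ Finset.Icc 1 n, 0 < impDen f n p i x := by
      intro i hi
      obtain ⟨r0, hr0, hpr0⟩ := Finset.exists_ne_zero_of_sum_ne_zero
        ((hp_row i hi) ▸ (one_ne_zero : (1:ℝ) ≠ 0))
      exact Finset.sum_pos'
        (fun r hr => mul_nonneg (hp_nonneg i hi r hr) (hos r hr).le)
        ⟨r0, hr0, mul_pos (lt_of_le_of_ne (hp_nonneg i hi r0 hr0) (Ne.symm hpr0))
          (hos r0 hr0)⟩
    have hjensen : ∀ i ∈ Finset.Icc 1 n,
        ∑ r ∈ Finset.Icc 1 n, p i r * Real.log (osDen f n r x)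
          ≤ Real.log (impDen f n p i x) := by
      intro i hi
      have := strictConcaveOn_log_Ioi.concaveOn.le_map_sum
        (hp_nonneg i hi) (hp_row i hi) (fun r hr => Set.mem_Ioi.2 (hos r hr))
      simpa [impDen, smul_eq_mul] using this
    have hsum : ∑ i ∈ Finset.Icc 1 n, Real.log (osDen f n i x)
        ≤ ∑ i ∈ Finset.Icc 1 n, Real.log (impDen f n p i x) := by
      calc ∑ i ∈ Finset.Icc 1 n, Real.log (osDen f n i x)
          = ∑ r ∈ Finset.Icc 1 n,
              (∑ i ∈ Finset.Icc 1 n, p i r) * Real.log (osDen f n r x) :=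
            Finset.sum_congr rfl fun r hr => by rw [hp_col r hr, one_mul]
        _ = ∑ r ∈ Finset.Icc 1 n, ∑ i ∈ Finset.Icc 1 n,
              p i r * Real.log (osDen f n r x) :=
            Finset.sum_congr rfl fun r _ => Finset.sum_mul _ _ _
        _ = ∑ i ∈ Finset.Icc 1 n, ∑ r ∈ Finset.Icc 1 n,
              p i r * Real.log (osDen f n r x) := Finset.sum_comm
        _ ≤ ∑ i ∈ Finset.Icc 1 n, Real.log (impDen f n p i x) :=
            Finset.sum_le_sum hjensen
    have e1 : (∑ i ∈ Finset.Icc 1 n, f x * Real.log (f x / impDen f n p i x))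
        = f x * ∑ i ∈ Finset.Icc 1 n,
            (Real.log (f x) - Real.log (impDen f n p i x)) := by
      rw [Finset.mul_sum]
      exact Finset.sum_congr rfl fun i hi => by
        rw [Real.log_div hfpos.ne' (himp i hi).ne']
    have e2 : (∑ i ∈ Finset.Icc 1 n, f x * Real.log (f x / osDen f n i x))
        = f x * ∑ i ∈ Finset.Icc 1 n,
            (Real.log (f x) - Real.log (osDen f n i x)) := by
      rw [Finset.mul_sum]
      exact Finset.sum_congr rfl fun i hi => by
        rw [Real.log_div hfpos.ne' (hos i hi).ne']
    rw [e1, e2]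
    apply mul_le_mul_of_nonneg_left _ hfpos.le
    rw [Finset.sum_sub_distrib, Finset.sum_sub_distrib]
    linarith

/-- The KL information between an SRS and an imperfect RSS of size `n` is at most the KL
information between an SRS and a perfect RSS of the same size. -/
theorem KL_SRS_imperfect_le_KL_SRS_perfect (n : ℕ) (hn : 1 ≤ n) (f : ℝ → ℝ)
    (hf_meas : Measurable f) (hf_nonneg : ∀ x, 0 ≤ f x)
    (hf_int : ∫ x, f x = 1)
    (hF_cont : Continuous (cdfOf f))
    (p : ℕ → ℕ → ℝ)
    (hp_nonneg : ∀ i ∈ Finset.Icc 1 n, ∀ r ∈ Finset.Icc 1 n, 0 ≤ p i r)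
    (hp_row : ∀ i ∈ Finset.Icc 1 n, ∑ r ∈ Finset.Icc 1 n, p i r = 1)
    (hp_col : ∀ r ∈ Finset.Icc 1 n, ∑ i ∈ Finset.Icc 1 n, p i r = 1)
    (hint_perfect : ∀ i ∈ Finset.Icc 1 n,
      Integrable (fun x => f x * Real.log (f x / osDen f n i x)))
    (hint_imperfect : ∀ i ∈ Finset.Icc 1 n,
      Integrable (fun x => f x * Real.log (f x / impDen f n p i x))) :
    (∑ i ∈ Finset.Icc 1 n, KL f (impDen f n p i))
      ≤ ∑ i ∈ Finset.Icc 1 n, KL f (osDen f n i) := by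
  have eL : (∑ i ∈ Finset.Icc 1 n, KL f (impDen f n p i))
      = ∫ x, ∑ i ∈ Finset.Icc 1 n, f x * Real.log (f x / impDen f n p i x) := by
    rw [integral_finset_sum _ hint_imperfect]; rfl
  have eR : (∑ i ∈ Finset.Icc 1 n, KL f (osDen f n i))
      = ∫ x, ∑ i ∈ Finset.Icc 1 n, f x * Real.log (f x / osDen f n i x) := by
    rw [integral_finset_sum _ hint_perfect]; rfl
  rw [eL, eR]
  refine integral_mono_ae (integrable_finset_sum _ hint_imperfect)
    (integrable_finset_sum _ hint_perfect) ?_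
  filter_upwards [ae_cdf_good f hf_meas hf_nonneg hf_int] with x hx
  refine pointwise_sum_le n f p hp_nonneg hp_row hp_col x ?_
  by_cases h : f x = 0
  · exact Or.inl h
  · exact Or.inr ⟨lt_of_le_of_ne (hf_nonneg x) (Ne.symm h), hx h⟩
end
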